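/- arXiv:1503.03016 — 9 statements merged into one kernel-verified Lean document; each statement's English description precedes it below -/
import Mathlib

section
/- Let X = {x_0,…,x_10} ⊂ ℤ² with x_0=(2,0), x_1=(1,1), x_2=(0,2), x_3=(−1,2), x_4=(−2,1), x_5=(−2,0), x_6=(−2,−1), x_7=(−1,−2), x_8=(0,−2), x_9=(1,−1), x_10=(0,0), and let Y = X \ {x_0}, both with c_2-adjacency. Then the digital images (X,c_2) and (Y,c_2) are (c_2,c_2)-homotopy equivalent. -/
/-- 2-adjacency (c₁-adjacency) on the natural numbers / digital intervals. -/
def natAdj (a b : ℕ) : Prop := b = a + 1 ∨ a = b + 1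

/-- Digital `(κ,μ)`-continuity of a function between digital images. -/
def DigCont {X Y : Type*} (κ : X → X → Prop) (μ : Y → Y → Prop) (f : X → Y) : Prop :=
  ∀ a b, κ a b → f a = f b ∨ μ (f a) (f b)

/-- `H : X × [0,m]_ℤ → Y` is a digital `(κ,μ)`-homotopy from `f` to `g`. -/
def IsHomotopy {X Y : Type*} (κ : X → X → Prop) (μ : Y → Y → Prop)
    (f g : X → Y) (m : ℕ) (H : X → ℕ → Y) : Prop :=
  (∀ x, H x 0 = f x) ∧ (∀ x, H x m = g x) ∧
  (∀ x s t, s ≤ m → t ≤ m → natAdj s t → H x s = H x t ∨ μ (H x s) (H x t)) ∧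
  (∀ t, t ≤ m → DigCont κ μ (fun x => H x t))

/-- `f` and `g` are digitally `(κ,μ)`-homotopic. -/
def Homotopic {X Y : Type*} (κ : X → X → Prop) (μ : Y → Y → Prop) (f g : X → Y) : Prop :=
  ∃ m H, IsHomotopy κ μ f g m H

/-- `c₂`-adjacency on `ℤ²`. -/
def c2Adj (p q : ℤ × ℤ) : Prop := p ≠ q ∧ |p.1 - q.1| ≤ 1 ∧ |p.2 - q.2| ≤ 1

/-- The points `x_0, …, x_10` of the example (all `n ≥ 10` give `x_10 = (0,0)`). -/
def xpt : ℕ → ℤ × ℤ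
  | 0 => (2, 0)
  | 1 => (1, 1)
  | 2 => (0, 2)
  | 3 => (-1, 2)
  | 4 => (-2, 1)
  | 5 => (-2, 0)
  | 6 => (-2, -1)
  | 7 => (-1, -2)
  | 8 => (0, -2)
  | 9 => (1, -1)
  | _ => (0, 0)

/-- `X = {x_0, …, x_10}`. -/
def Xset : Set (ℤ × ℤ) := Set.range xpt

/-- `Y = X \ {x_0}`. -/
def Yset : Set (ℤ × ℤ) := Xset \ {xpt 0}

/-- The `c₂`-adjacency induced on a subset of `ℤ²`. -/
def subAdj (S : Set (ℤ × ℤ)) (a b : ↥S) : Prop := c2Adj a.1 b.1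

instance (p q : ℤ × ℤ) : Decidable (c2Adj p q) := by unfold c2Adj; infer_instance

/-- The rotation map on the underlying points. -/
def rho0 (p : ℤ × ℤ) : ℤ × ℤ :=
  if p = (2,0) then (1,1) else
  if p = (1,1) then (0,2) else
  if p = (0,2) then (-1,2) else
  if p = (-1,2) then (-2,1) else
  if p = (-2,1) then (-2,0) else
  if p = (-2,0) then (-2,-1) else
  if p = (-2,-1) then (-1,-2) else
  if p = (-1,-2) then (0,-2) else
  if p = (0,-2) then (1,-1) else
  if p = (1,-1) then (0,0) else
  if p = (0,0) then (1,1) else p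

/-- The retraction on the underlying points. -/
def f0 (p : ℤ × ℤ) : ℤ × ℤ := if p = (2,0) then (0,0) else p

lemma mem_Xset_iff (p : ℤ × ℤ) : p ∈ Xset ↔
    p = (2,0) ∨ p = (1,1) ∨ p = (0,2) ∨ p = (-1,2) ∨ p = (-2,1) ∨ p = (-2,0) ∨
    p = (-2,-1) ∨ p = (-1,-2) ∨ p = (0,-2) ∨ p = (1,-1) ∨ p = (0,0) := by
  constructor
  · rintro ⟨n, rfl⟩
    rcases n with _|_|_|_|_|_|_|_|_|_|n <;> simp [xpt]
  · rintro (rfl|rfl|rfl|rfl|rfl|rfl|rfl|rfl|rfl|rfl|rfl)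
    exacts [⟨0, rfl⟩, ⟨1, rfl⟩, ⟨2, rfl⟩, ⟨3, rfl⟩, ⟨4, rfl⟩, ⟨5, rfl⟩,
      ⟨6, rfl⟩, ⟨7, rfl⟩, ⟨8, rfl⟩, ⟨9, rfl⟩, ⟨10, rfl⟩]

lemma rho0_memX {p : ℤ × ℤ} (hp : p ∈ Xset) : rho0 p ∈ Xset := by
  rw [mem_Xset_iff] at hp ⊢
  rcases hp with rfl|rfl|rfl|rfl|rfl|rfl|rfl|rfl|rfl|rfl|rfl <;> decide

lemma rho0_adj {p : ℤ × ℤ} (hp : p ∈ Xset) : c2Adj (rho0 p) p := by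
  rw [mem_Xset_iff] at hp
  rcases hp with rfl|rfl|rfl|rfl|rfl|rfl|rfl|rfl|rfl|rfl|rfl <;> decide

lemma rho0_cont {p q : ℤ × ℤ} (hp : p ∈ Xset) (hq : q ∈ Xset) :
    c2Adj p q → rho0 p = rho0 q ∨ c2Adj (rho0 p) (rho0 q) := by
  rw [mem_Xset_iff] at hp hq
  rcases hp with rfl|rfl|rfl|rfl|rfl|rfl|rfl|rfl|rfl|rfl|rfl <;>
    rcases hq with rfl|rfl|rfl|rfl|rfl|rfl|rfl|rfl|rfl|rfl|rfl <;> decide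

lemma rho0_iter10 {p : ℤ × ℤ} (hp : p ∈ Xset) : rho0^[10] p = f0 p := by
  rw [mem_Xset_iff] at hp
  rcases hp with rfl|rfl|rfl|rfl|rfl|rfl|rfl|rfl|rfl|rfl|rfl <;> decide

lemma f0_memY {p : ℤ × ℤ} (hp : p ∈ Xset) : f0 p ∈ Yset := by
  constructor
  · rw [mem_Xset_iff] at hp ⊢
    rcases hp with rfl|rfl|rfl|rfl|rfl|rfl|rfl|rfl|rfl|rfl|rfl <;> decide
  · rw [mem_Xset_iff] at hp
    rcases hp with rfl|rfl|rfl|rfl|rfl|rfl|rfl|rfl|rfl|rfl|rfl <;> decide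

lemma f0_cont {p q : ℤ × ℤ} (hp : p ∈ Xset) (hq : q ∈ Xset) :
    c2Adj p q → f0 p = f0 q ∨ c2Adj (f0 p) (f0 q) := by
  rw [mem_Xset_iff] at hp hq
  rcases hp with rfl|rfl|rfl|rfl|rfl|rfl|rfl|rfl|rfl|rfl|rfl <;>
    rcases hq with rfl|rfl|rfl|rfl|rfl|rfl|rfl|rfl|rfl|rfl|rfl <;> decide

lemma c2Adj_symm {p q : ℤ × ℤ} (h : c2Adj p q) : c2Adj q p := by
  obtain ⟨h1, h2, h3⟩ := h
  exact ⟨fun e => h1 e.symm, by rw [abs_sub_comm]; exact h2, by rw [abs_sub_comm]; exact h3⟩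

/-- The rotation as a self-map of `X`. -/
def rhoX (x : ↥Xset) : ↥Xset := ⟨rho0 x.1, rho0_memX x.2⟩

/-- The retraction `X → Y`. -/
def fXY (x : ↥Xset) : ↥Yset := ⟨f0 x.1, f0_memY x.2⟩

/-- The inclusion `Y → X`. -/
def gYX (y : ↥Yset) : ↥Xset := ⟨y.1, y.2.1⟩

lemma rhoX_iter_val (k : ℕ) (x : ↥Xset) : (rhoX^[k] x).1 = rho0^[k] x.1 := by
  induction k generalizing x with
  | zero => rfl
  | succ n ih =>
    rw [Function.iterate_succ_apply, Function.iterate_succ_apply]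
    exact ih (rhoX x)

lemma digCont_comp {A B C : Type*} {κ : A → A → Prop} {μ : B → B → Prop} {ν : C → C → Prop}
    {f : A → B} {g : B → C} (hf : DigCont κ μ f) (hg : DigCont μ ν g) :
    DigCont κ ν (fun a => g (f a)) := by
  intro a b hab
  rcases hf a b hab with h | h
  · exact Or.inl (congrArg g h)
  · exact hg _ _ h

lemma digCont_rhoX : DigCont (subAdj Xset) (subAdj Xset) rhoX := by
  intro a b hab
  rcases rho0_cont a.2 b.2 hab with h | h
  · exact Or.inl (Subtype.ext h)
  · exact Or.inr h

lemma digCont_rhoX_iter (k : ℕ) : DigCont (subAdj Xset) (subAdj Xset) (fun x => rhoX^[k] x) := by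
  induction k with
  | zero => exact fun a b hab => Or.inr hab
  | succ n ih =>
    have := digCont_comp ih digCont_rhoX
    simpa [Function.iterate_succ_apply'] using this

/-- The digital images `(X, c₂)` and `(Y, c₂)` of the example
are `(c₂,c₂)`-homotopy equivalent. -/
theorem X_Y_homotopy_equivalent :
    ∃ (f : ↥Xset → ↥Yset) (g : ↥Yset → ↥Xset),
      DigCont (subAdj Xset) (subAdj Yset) f ∧
      DigCont (subAdj Yset) (subAdj Xset) g ∧
      Homotopic (subAdj Xset) (subAdj Xset) (g ∘ f) id ∧
      Homotopic (subAdj Yset) (subAdj Yset) (f ∘ g) id := by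
  refine ⟨fXY, gYX, ?_, ?_, ?_, ?_⟩
  · -- continuity of f
    intro a b hab
    rcases f0_cont a.2 b.2 hab with h | h
    · exact Or.inl (Subtype.ext h)
    · exact Or.inr h
  · -- continuity of g
    intro a b hab
    exact Or.inr hab
  · -- g ∘ f ≃ id
    refine ⟨10, fun x t => rhoX^[10 - t] x, ?_, ?_, ?_, ?_⟩
    · intro x
      refine Subtype.ext ?_
      show (rhoX^[10] x).1 = f0 x.1
      rw [rhoX_iter_val]
      exact rho0_iter10 x.2
    · intro x
      simp
    · intro x s t hs ht hst
      rcases hst with rfl | rfl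
      · -- t = s + 1
        right
        show c2Adj (rhoX^[10 - s] x).1 (rhoX^[10 - (s+1)] x).1
        have h1 : 10 - s = (10 - (s+1)) + 1 := by omega
        rw [h1, Function.iterate_succ_apply']
        exact rho0_adj (rhoX^[10 - (s+1)] x).2
      · -- s = t + 1
        right
        show c2Adj (rhoX^[10 - (t+1)] x).1 (rhoX^[10 - t] x).1
        have h1 : 10 - t = (10 - (t+1)) + 1 := by omega
        rw [h1, Function.iterate_succ_apply']
        exact c2Adj_symm (rho0_adj (rhoX^[10 - (t+1)] x).2)
    · intro t _
      exact digCont_rhoX_iter (10 - t)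
  · -- f ∘ g ≃ id
    refine ⟨0, fun y t => y, ?_, ?_, ?_, ?_⟩
    · intro y
      refine Subtype.ext ?_
      show y.1 = f0 y.1
      have : y.1 ≠ (2,0) := y.2.2
      simp [f0, this]
    · intro y; rfl
    · intro x s t hs ht hst
      interval_cases s
      interval_cases t
      rcases hst with h | h <;> simp at h
    · intro t _
      exact fun a b hab => Or.inr hab
end

section
/- Let Y = {x_1,…,x_10} ⊂ ℤ² with x_1=(1,1), x_2=(0,2), x_3=(−1,2), x_4=(−2,1), x_5=(−2,0), x_6=(−2,−1), x_7=(−1,−2), x_8=(0,−2), x_9=(1,−1), x_10=(0,0), with c_2-adjacency. If h : (Y,c_2) → (Y,c_2) is a (c_2,c_2)-continuous map such that h(x) = x for some x ∈ Y and h is (c_2,c_2)-homotopic to the identity of Y in 1 step, then h is the identity of Y. -/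
/-- cyclic adjacency on `Fin 10` -/
def cyc (i j : Fin 10) : Prop := j = i + 1 ∨ i = j + 1
instance (i j : Fin 10) : Decidable (cyc i j) := by unfold cyc; infer_instance

lemma xpt_ne_zero : ∀ i : Fin 10, xpt (i.val + 1) ≠ xpt 0 := by decide

/-- the ten points of `Y` -/
def Yelt (i : Fin 10) : ↥Yset := ⟨xpt (i.val + 1), ⟨i.val + 1, rfl⟩, xpt_ne_zero i⟩

lemma Yelt_inj : ∀ i j : Fin 10, Yelt i = Yelt j → i = j := by
  have : ∀ i j : Fin 10, xpt (i.val+1) = xpt (j.val+1) → i = j := by decide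
  intro i j hij
  exact this i j (congrArg Subtype.val hij)

lemma Yelt_surj (p : ↥Yset) : ∃ i : Fin 10, Yelt i = p := by
  obtain ⟨q, ⟨n, hn⟩, hne⟩ := p
  simp only [Set.mem_singleton_iff] at hne
  subst hn
  match n with
  | 0 => exact absurd rfl hne
  | 1 => exact ⟨0, rfl⟩
  | 2 => exact ⟨1, rfl⟩
  | 3 => exact ⟨2, rfl⟩
  | 4 => exact ⟨3, rfl⟩
  | 5 => exact ⟨4, rfl⟩
  | 6 => exact ⟨5, rfl⟩
  | 7 => exact ⟨6, rfl⟩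
  | 8 => exact ⟨7, rfl⟩
  | 9 => exact ⟨8, rfl⟩
  | 10 => exact ⟨9, rfl⟩
  | (n+11) => exact ⟨9, Subtype.ext rfl⟩

lemma Yelt_adj : ∀ i j : Fin 10, subAdj Yset (Yelt i) (Yelt j) ↔ cyc i j := by
  have : ∀ i j : Fin 10, c2Adj (xpt (i.val+1)) (xpt (j.val+1)) ↔ cyc i j := by decide
  exact this

/-- displacement encoding -/
def disp : Fin 3 → Fin 10
  | 0 => 9
  | 1 => 0
  | _ => 1

lemma keyFin (g : Fin 10 → Fin 10)
    (hA : ∀ i, g i = i ∨ cyc (g i) i)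
    (hB : ∀ i j, cyc i j → g i = g j ∨ cyc (g i) (g j))
    (hC : ∃ i, g i = i) : ∀ i, g i = i := by
  classical
  set e : Fin 10 → Fin 3 := fun i => if g i = i + 1 then 2 else if g i = i then 1 else 0 with he
  have claim : ∀ i, g i = i + disp (e i) := by
    intro i
    by_cases h2 : g i = i + 1
    · have he2 : e i = 2 := by simp [he, h2]
      rw [he2, h2]
      exact (by decide : ∀ i : Fin 10, i + 1 = i + disp 2) i
    · by_cases h1 : g i = i
      · have he1 : e i = 1 := by simp [he, h2, h1]
        rw [he1, h1]
        exact (by decide : ∀ i : Fin 10, i = i + disp 1) i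
      · have he0 : e i = 0 := by simp [he, h2, h1]
        rcases hA i with h | h
        · exact absurd h h1
        · rcases h with h | h
          · rw [he0]
            exact (by decide : ∀ i j : Fin 10, i = j + 1 → j = i + disp 0) i (g i) h
          · exact absurd h h2
  have hmono : ∀ i : Fin 10, e (i + 1) ≤ e i := by
    intro i
    have hc := hB i (i + 1) (Or.inl rfl)
    rw [claim i, claim (i + 1)] at hc
    exact (by decide : ∀ (a b : Fin 3) (i : Fin 10),
      (i + disp a = (i + 1) + disp b ∨ cyc (i + disp a) ((i + 1) + disp b)) → b ≤ a)
      (e i) (e (i+1)) i hc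
  obtain ⟨i0, hi0⟩ := hC
  have hE1 : e i0 = 1 := by
    have := claim i0
    rw [hi0] at this
    exact (by decide : ∀ (i : Fin 10) (a : Fin 3), i = i + disp a → a = 1) i0 (e i0) this
  have h0 : (e 1).val ≤ (e 0).val := hmono 0
  have h1 : (e 2).val ≤ (e 1).val := hmono 1
  have h2 : (e 3).val ≤ (e 2).val := hmono 2
  have h3 : (e 4).val ≤ (e 3).val := hmono 3
  have h4 : (e 5).val ≤ (e 4).val := hmono 4
  have h5 : (e 6).val ≤ (e 5).val := hmono 5
  have h6 : (e 7).val ≤ (e 6).val := hmono 6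
  have h7 : (e 8).val ≤ (e 7).val := hmono 7
  have h8 : (e 9).val ≤ (e 8).val := hmono 8
  have h9 : (e 0).val ≤ (e 9).val := hmono 9
  have hv : (e i0).val = 1 := by rw [hE1]; rfl
  have hcases : ∀ i : Fin 10,
      i = 0 ∨ i = 1 ∨ i = 2 ∨ i = 3 ∨ i = 4 ∨ i = 5 ∨ i = 6 ∨ i = 7 ∨ i = 8 ∨ i = 9 := by
    decide
  have hv1 : ∀ k : Fin 10, (e k).val = (e 0).val := by
    intro k
    rcases hcases k with rfl|rfl|rfl|rfl|rfl|rfl|rfl|rfl|rfl|rfl <;> omega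
  have h01 : (e 0).val = 1 := (hv1 i0).symm.trans hv
  have hone : ∀ k : Fin 10, e k = 1 := by
    intro k
    have hk : (e k).val = 1 := (hv1 k).trans h01
    exact Fin.ext (by simpa using hk)
  intro i
  rw [claim i, hone i]
  exact (by decide : ∀ i : Fin 10, i + disp 1 = i) i

/-- If `h : (Y,c₂) → (Y,c₂)` is continuous, fixes some point of `Y`,
and is homotopic to `1_Y` in one step, then `h = 1_Y`. -/
theorem Y_one_step_fix_is_id (h : ↥Yset → ↥Yset)
    (hcont : DigCont (subAdj Yset) (subAdj Yset) h)
    (hfix : ∃ x : ↥Yset, h x = x)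
    (hhtpy : ∃ H, IsHomotopy (subAdj Yset) (subAdj Yset) h id 1 H) :
    h = id := by
  classical
  obtain ⟨H, hH0, hH1, hHt, _⟩ := hhtpy
  have hA0 : ∀ x, h x = x ∨ subAdj Yset (h x) x := by
    intro x
    have := hHt x 0 1 (by norm_num) le_rfl (Or.inl rfl)
    rw [hH0, hH1] at this
    simpa using this
  -- transfer to Fin 10
  have idx : ∀ p : ↥Yset, ∃ i : Fin 10, Yelt i = p := Yelt_surj
  choose ix hix using idx
  set g : Fin 10 → Fin 10 := fun i => ix (h (Yelt i)) with hg
  have hgY : ∀ i, Yelt (g i) = h (Yelt i) := fun i => hix (h (Yelt i))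
  have hA : ∀ i, g i = i ∨ cyc (g i) i := by
    intro i
    rcases hA0 (Yelt i) with h1 | h1
    · left; exact Yelt_inj _ _ (by rw [hgY i, h1])
    · right; exact (Yelt_adj _ _).1 (by rw [hgY i]; exact h1)
  have hB : ∀ i j, cyc i j → g i = g j ∨ cyc (g i) (g j) := by
    intro i j hij
    rcases hcont (Yelt i) (Yelt j) ((Yelt_adj i j).2 hij) with h1 | h1
    · left; exact Yelt_inj _ _ (by rw [hgY i, hgY j, h1])
    · right; exact (Yelt_adj _ _).1 (by rw [hgY i, hgY j]; exact h1)
  have hC : ∃ i, g i = i := by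
    obtain ⟨x, hx⟩ := hfix
    refine ⟨ix x, Yelt_inj _ _ ?_⟩
    rw [hgY (ix x), hix x, hx]
  have hid := keyFin g hA hB hC
  funext p
  obtain ⟨i, rfl⟩ := Yelt_surj p
  have := hgY i
  rw [hid i] at this
  exact this.symm
end

section
/- Let X = {x_0,…,x_10} ⊂ ℤ² with x_0=(2,0), x_1=(1,1), x_2=(0,2), x_3=(−1,2), x_4=(−2,1), x_5=(−2,0), x_6=(−2,−1), x_7=(−1,−2), x_8=(0,−2), x_9=(1,−1), x_10=(0,0), with c_2-adjacency. If h : (X,c_2) → (X,c_2) is a (c_2,c_2)-continuous map such that h(x_0) = x_0 and h is (c_2,c_2)-homotopic in 1 step to the identity of X, then h is the identity of X. -/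
instance inst_s2 (p q : ℤ × ℤ) : Decidable (c2Adj p q) := by unfold c2Adj; exact inferInstance

lemma xpt_large (n : ℕ) (hn : 10 ≤ n) : xpt n = (0,0) := by
  obtain ⟨m, rfl⟩ : ∃ m, n = m + 10 := ⟨n - 10, by omega⟩
  rfl

lemma mem_fin {p : ℤ × ℤ} (hp : p ∈ Xset) : ∃ m : Fin 11, p = xpt m.val := by
  obtain ⟨n, rfl⟩ := hp
  by_cases hn : n < 11
  · exact ⟨⟨n, hn⟩, rfl⟩
  · exact ⟨⟨10, by omega⟩, by rw [xpt_large n (by omega)]; rfl⟩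

lemma adj_succ : ∀ k : Fin 9, c2Adj (xpt k.val) (xpt (k.val+1)) := by decide
lemma adj90 : c2Adj (xpt 9) (xpt 0) := by decide
lemma adj1_10 : c2Adj (xpt 1) (xpt 10) := by decide
lemma adj9_10 : c2Adj (xpt 9) (xpt 10) := by decide

lemma keyGood : ∀ k : Fin 10, 1 ≤ k.val → ∀ m : Fin 11,
    (xpt m.val = xpt k.val ∨ c2Adj (xpt m.val) (xpt k.val)) →
    (xpt (k.val-1) = xpt m.val ∨ c2Adj (xpt (k.val-1)) (xpt m.val)) →
    xpt m.val = xpt (k.val-1) ∨ xpt m.val = xpt k.val := by decide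

lemma keyChain : ∀ k : Fin 9, 1 ≤ k.val → ∀ m : Fin 11,
    (xpt m.val = xpt (k.val+1) ∨ c2Adj (xpt m.val) (xpt (k.val+1))) →
    (xpt (k.val-1) = xpt m.val ∨ c2Adj (xpt (k.val-1)) (xpt m.val)) →
    xpt m.val = xpt k.val := by decide

lemma keyContra : ¬ (xpt 8 = xpt 0 ∨ c2Adj (xpt 8) (xpt 0)) := by decide

lemma keyTen : ∀ m : Fin 11,
    (xpt m.val = xpt 10 ∨ c2Adj (xpt m.val) (xpt 10)) →
    (xpt 1 = xpt m.val ∨ c2Adj (xpt 1) (xpt m.val)) →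
    (xpt 9 = xpt m.val ∨ c2Adj (xpt 9) (xpt m.val)) →
    xpt m.val = xpt 10 := by decide

/-- The canonical element `x_i` of `X`. -/
def XP (i : ℕ) : ↥Xset := ⟨xpt i, Set.mem_range_self i⟩


/-- If `h : (X,c₂) → (X,c₂)` is continuous, fixes `x₀`,
and is homotopic to `1_X` in one step, then `h = 1_X`. -/
theorem X_one_step_fix_is_id (h : ↥Xset → ↥Xset)
    (hcont : DigCont (subAdj Xset) (subAdj Xset) h)
    (hfix : h ⟨xpt 0, Set.mem_range_self 0⟩ = ⟨xpt 0, Set.mem_range_self 0⟩)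
    (hhtpy : ∃ H, IsHomotopy (subAdj Xset) (subAdj Xset) h id 1 H) :
    h = id := by
  obtain ⟨H, hH0, hH1, hHt, -⟩ := hhtpy
  -- one-step homotopy condition: h x = x or h x adjacent to x
  have hstep : ∀ x : ↥Xset, (h x).1 = x.1 ∨ c2Adj (h x).1 x.1 := by
    intro x
    have := hHt x 0 1 (by norm_num) (le_refl 1) (Or.inl rfl)
    rw [hH0, hH1] at this
    exact this.imp (congrArg Subtype.val) id
  have hf0 : (h (XP 0)).1 = xpt 0 := congrArg Subtype.val hfix
  -- continuity at val level
  have hc : ∀ a b : ℕ, c2Adj (xpt a) (xpt b) →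
      (h (XP a)).1 = (h (XP b)).1 ∨ c2Adj (h (XP a)).1 (h (XP b)).1 := by
    intro a b hab
    exact (hcont (XP a) (XP b) hab).imp (congrArg Subtype.val) id
  -- a "shift" forces a contradiction
  have contra : ∀ k : ℕ, 1 ≤ k → k ≤ 9 → (h (XP k)).1 = xpt (k-1) → False := by
    intro k hk1 hk9 hk
    have chain : ∀ j, k ≤ j → j ≤ 9 → (h (XP j)).1 = xpt (j-1) := by
      intro j hj
      induction j, hj using Nat.le_induction with
      | base => intro _; exact hk
      | succ j hj ih =>
        intro hj9
        have hjv : (h (XP j)).1 = xpt (j-1) := ih (by omega)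
        obtain ⟨m, hm⟩ := mem_fin (h (XP (j+1))).2
        have c1 : xpt m.val = xpt (j+1) ∨ c2Adj (xpt m.val) (xpt (j+1)) := by
          rw [← hm]; exact hstep (XP (j+1))
        have c2 : xpt (j-1) = xpt m.val ∨ c2Adj (xpt (j-1)) (xpt m.val) := by
          rw [← hm, ← hjv]; exact hc j (j+1) (adj_succ ⟨j, by omega⟩)
        have := keyChain ⟨j, by omega⟩ (by simpa using hk1.trans hj) m c1 c2
        rw [hm, this]; rfl
    have h9 : (h (XP 9)).1 = xpt 8 := chain 9 hk9 (le_refl 9)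
    have := hc 9 0 adj90
    rw [h9, hf0] at this
    exact keyContra this
  -- all of x_0,…,x_9 are fixed
  have main : ∀ k : ℕ, k ≤ 9 → (h (XP k)).1 = xpt k := by
    intro k
    induction k with
    | zero => intro _; exact hf0
    | succ k ih =>
      intro hk9
      have hkv : (h (XP k)).1 = xpt k := ih (by omega)
      obtain ⟨m, hm⟩ := mem_fin (h (XP (k+1))).2
      have c1 : xpt m.val = xpt (k+1) ∨ c2Adj (xpt m.val) (xpt (k+1)) := by
        rw [← hm]; exact hstep (XP (k+1))
      have c2 : xpt k = xpt m.val ∨ c2Adj (xpt k) (xpt m.val) := by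
        rw [← hm, ← hkv]; exact hc k (k+1) (adj_succ ⟨k, by omega⟩)
      have hgk : xpt ((k+1)-1) = xpt k := by congr 1
      rcases keyGood ⟨k+1, by omega⟩ (by exact Nat.succ_le_succ (Nat.zero_le k)) m c1 (by rw [hgk]; exact c2) with hbad | hgood
      · exact absurd (by rw [hm, hbad]) (fun hh => contra (k+1) (by omega) hk9 hh)
      · rw [hm, hgood]
  -- x_10 is fixed
  have main10 : (h (XP 10)).1 = xpt 10 := by
    obtain ⟨m, hm⟩ := mem_fin (h (XP 10)).2
    have c1 : xpt m.val = xpt 10 ∨ c2Adj (xpt m.val) (xpt 10) := by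
      rw [← hm]; exact hstep (XP 10)
    have c2 : xpt 1 = xpt m.val ∨ c2Adj (xpt 1) (xpt m.val) := by
      rw [← hm, ← main 1 (by omega)]; exact hc 1 10 adj1_10
    have c3 : xpt 9 = xpt m.val ∨ c2Adj (xpt 9) (xpt m.val) := by
      rw [← hm, ← main 9 (le_refl 9)]; exact hc 9 10 adj9_10
    rw [hm, keyTen m c1 c2 c3]
  -- conclude
  funext x
  obtain ⟨m, hm⟩ := mem_fin x.2
  have hx : x = XP m.val := Subtype.ext hm
  rw [hx]
  apply Subtype.ext
  show (h (XP m.val)).1 = xpt m.val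
  rcases Nat.lt_or_ge m.val 10 with hlt | hge
  · exact main m.val (by omega)
  · have : m.val = 10 := by omega
    rw [this]; exact main10
end

section
/- Let f, g : [0,m]_ℤ → X be paths in a digital image (X,κ) with f homotopic to g. Then f_∞ is EC homotopic to g_∞. If moreover the homotopy from f to g holds the endpoints fixed, then the induced EC homotopy from f_∞ to g_∞ holds the endpoints fixed. -/
/-- `(2,κ)`-continuity for functions on `ℕ* = {0,1,2,…}` with 2-adjacency. -/
def ECCont {X : Type*} (κ : X → X → Prop) (f : ℕ → X) : Prop :=
  ∀ a b, natAdj a b → f a = f b ∨ κ (f a) (f b)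

/-- An eventually constant (EC) path in `(X,κ)`. -/
def IsECPath {X : Type*} (κ : X → X → Prop) (f : ℕ → X) : Prop :=
  ECCont κ f ∧ ∃ N, ∀ n, N ≤ n → f n = f N

/-- `N_f`, the least index after which `f` is constant. -/
noncomputable def ecN {X : Type*} (f : ℕ → X) : ℕ :=
  sInf {m | ∀ n, m ≤ n → f n = f m}

/-- An EC homotopy from `f` to `g` (each stage is an EC path). -/
def IsECHomotopy {X : Type*} (κ : X → X → Prop) (f g : ℕ → X) (k : ℕ)
    (H : ℕ → ℕ → X) : Prop :=
  (∀ n, H n 0 = f n) ∧ (∀ n, H n k = g n) ∧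
  (∀ n s t, s ≤ k → t ≤ k → natAdj s t → H n s = H n t ∨ κ (H n s) (H n t)) ∧
  (∀ t, t ≤ k → IsECPath κ (fun n => H n t))

/-- The EC homotopy `H` from `f` to `g` holds the endpoints fixed. -/
def ECHoldsEnds {X : Type*} (f g : ℕ → X) (k : ℕ) (H : ℕ → ℕ → X) : Prop :=
  f 0 = g 0 ∧ (∀ t, t ≤ k → H 0 t = f 0) ∧
  ∃ c, ∀ n, c ≤ n → f n = g n ∧ ∀ t, t ≤ k → H n t = f n

/-- `f` and `g` are EC homotopic. -/
def ECHomotopic {X : Type*} (κ : X → X → Prop) (f g : ℕ → X) : Prop :=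
  ∃ k H, IsECHomotopy κ f g k H

/-- `f` and `g` are EC homotopic holding the endpoints fixed. -/
def ECHomotopicFix {X : Type*} (κ : X → X → Prop) (f g : ℕ → X) : Prop :=
  ∃ k H, IsECHomotopy κ f g k H ∧ ECHoldsEnds f g k H

/-- A finite digital path `f : [0,m]_ℤ → X`, represented by its length `len`
and its values, frozen (constant) beyond `len`. -/
structure DPath (X : Type*) where
  len : ℕ
  toFun : ℕ → X
  frozen : ∀ n, len ≤ n → toFun n = toFun len

/-- `p_∞ : ℕ* → X`, the eventually constant extension of a finite path. -/
def DPath.inf {X : Type*} (p : DPath X) : ℕ → X := fun n => p.toFun (min n p.len)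

/-- `(2,κ)`-continuity of a finite path on its domain `[0,len]_ℤ`. -/
def DPath.IsCont {X : Type*} (κ : X → X → Prop) (p : DPath X) : Prop :=
  ∀ a b, a ≤ p.len → b ≤ p.len → natAdj a b →
    p.toFun a = p.toFun b ∨ κ (p.toFun a) (p.toFun b)

/-- `f_-`, the restriction of an EC path `f` to `[0, N_f]_ℤ`. -/
noncomputable def ecTrunc {X : Type*} (f : ℕ → X) : DPath X where
  len := ecN f
  toFun := fun n => f (min n (ecN f))
  frozen := by intro n hn; simp [min_eq_right hn]

/-- Concatenation (product) `p * q` of finite paths. -/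
def DPath.concat {X : Type*} (p q : DPath X) : DPath X where
  len := p.len + q.len
  toFun := fun t => if t < p.len then p.toFun t else q.toFun (t - p.len)
  frozen := by
    intro n hn
    have h1 : ¬ n < p.len := by omega
    have h2 : ¬ p.len + q.len < p.len := by omega
    simp only [if_neg h1, if_neg h2]
    rw [q.frozen (n - p.len) (by omega), Nat.add_sub_cancel_left]

/-- A constant (trivial) path. -/
def IsConstPath {X : Type*} (p : DPath X) : Prop := ∀ n, p.toFun n = p.toFun 0

/-- The product `p * l₀ * l₁ * ⋯` of a nonempty family of paths. -/
def concatAll {X : Type*} (p : DPath X) (l : List (DPath X)) : DPath X :=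
  l.foldl DPath.concat p

/-- Consecutive paths in the list are composable (endpoints match). -/
def ChainOK {X : Type*} (l : List (DPath X)) : Prop :=
  l.Chain' (fun p q => p.toFun p.len = q.toFun 0)

/-- `TrivExt κ f f'` : the path `f'` is a trivial extension of the path `f`:
`f = f₁ * ⋯ * f_k`, `f' = F₁ * ⋯ * F_p`, with indices `i₁ < ⋯ < i_k`,
`F_{i_j} = f_j`, and every other `F_i` a constant loop. -/
def TrivExt {X : Type*} (κ : X → X → Prop) (f f' : DPath X) : Prop :=
  ∃ (a : DPath X) (fs : List (DPath X)) (b : DPath X) (Fs : List (DPath X)),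
    (∀ r ∈ a :: fs, DPath.IsCont κ r) ∧ (∀ r ∈ b :: Fs, DPath.IsCont κ r) ∧
    ChainOK (a :: fs) ∧ ChainOK (b :: Fs) ∧
    f = concatAll a fs ∧ f' = concatAll b Fs ∧
    ∃ idx : Fin (a :: fs).length → Fin (b :: Fs).length,
      StrictMono idx ∧
      (∀ j, (b :: Fs).get (idx j) = (a :: fs).get j) ∧
      (∀ i, (∀ j, idx j ≠ i) → IsConstPath ((b :: Fs).get i))

/-- A digital homotopy `H : [0,m]_ℤ × [0,k]_ℤ → X` between paths `F` and `G`. -/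
def IsPathHomotopy {X : Type*} (κ : X → X → Prop) (m k : ℕ) (F G : ℕ → X)
    (H : ℕ → ℕ → X) : Prop :=
  (∀ t, t ≤ m → H t 0 = F t) ∧ (∀ t, t ≤ m → H t k = G t) ∧
  (∀ t, t ≤ m → ∀ s₁ s₂, s₁ ≤ k → s₂ ≤ k → natAdj s₁ s₂ →
    H t s₁ = H t s₂ ∨ κ (H t s₁) (H t s₂)) ∧
  (∀ s, s ≤ k → ∀ t₁ t₂, t₁ ≤ m → t₂ ≤ m → natAdj t₁ t₂ →
    H t₁ s = H t₂ s ∨ κ (H t₁ s) (H t₂ s))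

/-- The homotopy `H` between paths `F, G : [0,m]_ℤ → X` holds the endpoints fixed. -/
def PathHoldsEnds {X : Type*} (m k : ℕ) (F G : ℕ → X) (H : ℕ → ℕ → X) : Prop :=
  F 0 = G 0 ∧ F m = G m ∧ ∀ s, s ≤ k → H 0 s = F 0 ∧ H m s = F m

/-- Paths `F, G : [0,m]_ℤ → X` are homotopic. -/
def PathHomotopic {X : Type*} (κ : X → X → Prop) (m : ℕ) (F G : ℕ → X) : Prop :=
  ∃ k H, IsPathHomotopy κ m k F G H

/-- Paths `F, G : [0,m]_ℤ → X` are homotopic holding the endpoints fixed. -/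
def PathHomotopicFix {X : Type*} (κ : X → X → Prop) (m : ℕ) (F G : ℕ → X) : Prop :=
  ∃ k H, IsPathHomotopy κ m k F G H ∧ PathHoldsEnds m k F G H

/-- If paths `f, g : [0,m]_ℤ → X` are homotopic then `f_∞` and `g_∞`
are EC homotopic; if the homotopy holds the endpoints fixed, so does the induced EC
homotopy. -/
theorem homotopic_inf_ec_homotopic {X : Type*} (κ : X → X → Prop) (hκ : Symmetric κ)
    (f g : DPath X) (hlen : f.len = g.len)
    (hf : f.IsCont κ) (hg : g.IsCont κ) :
    (PathHomotopic κ f.len f.toFun g.toFun → ECHomotopic κ f.inf g.inf) ∧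
    (PathHomotopicFix κ f.len f.toFun g.toFun → ECHomotopicFix κ f.inf g.inf) := by
  have key : ∀ k H, IsPathHomotopy κ f.len k f.toFun g.toFun H →
      IsECHomotopy κ f.inf g.inf k (fun n t => H (min n f.len) t) := by
    intro k H ⟨h0, hk, hvert, hhor⟩
    refine ⟨fun n => ?_, fun n => ?_, fun n s t hs ht hst => ?_, fun t ht => ?_⟩
    · exact h0 _ (min_le_right _ _)
    · show H (min n f.len) k = g.inf n
      rw [hk _ (min_le_right _ _)]
      show g.toFun (min n f.len) = g.toFun (min n g.len)
      rw [hlen]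
    · exact hvert _ (min_le_right _ _) s t hs ht hst
    · constructor
      · intro a b hab
        show H (min a f.len) t = H (min b f.len) t ∨ _
        have hcase : min a f.len = min b f.len ∨ natAdj (min a f.len) (min b f.len) := by
          unfold natAdj at hab ⊢; omega
        rcases hcase with h | h
        · left; rw [h]
        · exact hhor t ht _ _ (min_le_right _ _) (min_le_right _ _) h
      · refine ⟨f.len, fun n hn => ?_⟩
        show H (min n f.len) t = H (min f.len f.len) t
        rw [min_eq_right hn, min_self]
  constructor
  · rintro ⟨k, H, hH⟩
    exact ⟨k, _, key k H hH⟩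
  · rintro ⟨k, H, hH, he0, hem, hends⟩
    refine ⟨k, _, key k H hH, ?_, fun t ht => ?_, f.len, fun n hn => ⟨?_, fun t ht => ?_⟩⟩
    · show f.toFun (min 0 f.len) = g.toFun (min 0 g.len)
      simp [he0]
    · show H (min 0 f.len) t = f.toFun (min 0 f.len)
      simp only [Nat.zero_min]
      exact (hends t ht).1
    · show f.toFun (min n f.len) = g.toFun (min n g.len)
      rw [min_eq_right hn, min_eq_right (hlen ▸ hn), ← hlen, hem]
    · show H (min n f.len) t = f.toFun (min n f.len)
      rw [min_eq_right hn]
      exact (hends t ht).2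
end

section
/- Let f and g be EC homotopic EC paths in a digital image (X,κ). Then f_− and g_− have homotopic trivial extensions. If moreover f and g are EC homotopic holding the endpoints fixed, then f_− and g_− have trivial extensions that are homotopic holding the endpoints fixed. -/
/-! Restricted to `[0,m]_ℤ × [0,k]_ℤ`, an EC homotopy from `f` to `g` is a homotopy of finite paths
from `f` to `g` on `[0,m]_ℤ`, for every `m`, and it holds the endpoints fixed once `m` is past the index
from which the EC homotopy is stationary. For `m ≥ N_f`, the path `f` on `[0,m]_ℤ` is `f_−` followed
by the constant loop at `f (N_f)` of length `m - N_f`, hence a trivial extension of `f_−`. So it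
suffices to take `m` large. -/

section

variable {X : Type*} {κ : X → X → Prop}

lemma apply_eq_apply_ecN {f : ℕ → X} (hf : ∃ N, ∀ n, N ≤ n → f n = f N) {n : ℕ}
    (hn : ecN f ≤ n) : f n = f (ecN f) :=
  Nat.sInf_mem (s := {m | ∀ n, m ≤ n → f n = f m}) hf n hn

lemma ecTrunc_isCont {f : ℕ → X} (hf : ECCont κ f) : (ecTrunc f).IsCont κ := by
  intro a b (ha : a ≤ ecN f) (hb : b ≤ ecN f) hab
  simpa only [ecTrunc, min_eq_left ha, min_eq_left hb] using hf a b hab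

namespace DPath

def const (x : X) (l : ℕ) : DPath X := ⟨l, fun _ => x, fun _ _ => rfl⟩

lemma const_isCont (x : X) (l : ℕ) : (const x l).IsCont κ := fun _ _ _ _ _ => Or.inl rfl

def padConst (p : DPath X) (l : ℕ) : DPath X := p.concat (const (p.toFun p.len) l)

lemma trivExt_padConst {p : DPath X} (hp : p.IsCont κ) (l : ℕ) :
    TrivExt κ p (p.padConst l) := by
  refine ⟨p, [], p, [const (p.toFun p.len) l], ?_, ?_, List.isChain_singleton _, ?_, rfl, rfl,
    fun _ => 0, Subsingleton.strictMono (α := Fin 1) _, ?_, ?_⟩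
  · simpa using hp
  · simpa using ⟨hp, const_isCont _ l⟩
  · exact List.isChain_pair.mpr rfl
  · intro j
    fin_cases j
    rfl
  · intro i hi
    fin_cases i
    · exact absurd rfl (hi 0)
    · exact fun _ => rfl

end DPath

lemma ecTrunc_padConst_toFun {f : ℕ → X} (hf : ∃ N, ∀ n, N ≤ n → f n = f N) (l : ℕ) :
    ((ecTrunc f).padConst l).toFun = f := by
  funext t
  show (if t < ecN f then f (min t (ecN f)) else f (min (ecN f) (ecN f))) = f t
  split_ifs with ht
  · rw [min_eq_left ht.le]
  · rw [min_self, apply_eq_apply_ecN hf (not_lt.mp ht)]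

lemma IsECPath.exists_trivExt_ecTrunc {f : ℕ → X} (hf : IsECPath κ f) {m : ℕ} (hm : ecN f ≤ m) :
    ∃ F : DPath X, TrivExt κ (ecTrunc f) F ∧ F.len = m ∧ F.toFun = f :=
  ⟨(ecTrunc f).padConst (m - ecN f), DPath.trivExt_padConst (ecTrunc_isCont hf.1) _,
    Nat.add_sub_of_le hm,
    ecTrunc_padConst_toFun hf.2 _⟩

lemma IsECHomotopy.isPathHomotopy {f g : ℕ → X} {k : ℕ} {H : ℕ → ℕ → X}
    (hH : IsECHomotopy κ f g k H) (m : ℕ) : IsPathHomotopy κ m k f g H :=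
  ⟨fun t _ => hH.1 t, fun t _ => hH.2.1 t, fun t _ => hH.2.2.1 t,
    fun s hs t₁ t₂ _ _ => (hH.2.2.2 s hs).1 t₁ t₂⟩

lemma ECHomotopic.pathHomotopic {f g : ℕ → X} (h : ECHomotopic κ f g) (m : ℕ) :
    PathHomotopic κ m f g :=
  let ⟨k, H, hH⟩ := h
  ⟨k, H, hH.isPathHomotopy m⟩

lemma ECHomotopicFix.exists_pathHomotopicFix {f g : ℕ → X} (h : ECHomotopicFix κ f g) :
    ∃ c, ∀ m, c ≤ m → PathHomotopicFix κ m f g := by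
  obtain ⟨k, H, hH, hf0, hH0, c, hc⟩ := h
  exact ⟨c, fun m hm => ⟨k, H, hH.isPathHomotopy m, hf0, (hc m hm).1,
    fun s hs => ⟨hH0 s hs, (hc m hm).2 s hs⟩⟩⟩

end

theorem ec_homotopic_trunc_trivial_extensions_general {X : Type*} (κ : X → X → Prop)
    (f g : ℕ → X) (hf : IsECPath κ f) (hg : IsECPath κ g) :
    (ECHomotopic κ f g →
      ∃ F G : DPath X, TrivExt κ (ecTrunc f) F ∧ TrivExt κ (ecTrunc g) G ∧
        F.len = G.len ∧ PathHomotopic κ F.len F.toFun G.toFun) ∧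
    (ECHomotopicFix κ f g →
      ∃ F G : DPath X, TrivExt κ (ecTrunc f) F ∧ TrivExt κ (ecTrunc g) G ∧
        F.len = G.len ∧ PathHomotopicFix κ F.len F.toFun G.toFun) := by
  constructor
  · intro h
    set m := max (ecN f) (ecN g)
    obtain ⟨F, hF, hFm, hFf⟩ := hf.exists_trivExt_ecTrunc (m := m) (le_max_left _ _)
    obtain ⟨G, hG, hGm, hGg⟩ := hg.exists_trivExt_ecTrunc (m := m) (le_max_right _ _)
    refine ⟨F, G, hF, hG, hFm.trans hGm.symm, ?_⟩
    rw [hFm, hFf, hGg]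
    exact h.pathHomotopic m
  · intro h
    obtain ⟨c, hc⟩ := h.exists_pathHomotopicFix
    set m := max (max (ecN f) (ecN g)) c
    obtain ⟨F, hF, hFm, hFf⟩ := hf.exists_trivExt_ecTrunc (m := m) (by omega)
    obtain ⟨G, hG, hGm, hGg⟩ := hg.exists_trivExt_ecTrunc (m := m) (by omega)
    refine ⟨F, G, hF, hG, hFm.trans hGm.symm, ?_⟩
    rw [hFm, hFf, hGg]
    exact hc m (le_max_right _ _)

/-- If EC paths `f` and `g` are EC homotopic, then `f₋` and `g₋`
have homotopic trivial extensions; if the EC homotopy holds the endpoints fixed,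
the trivial extensions can be chosen homotopic holding the endpoints fixed. -/
theorem ec_homotopic_trunc_trivial_extensions {X : Type*} (κ : X → X → Prop)
    (hκ : Symmetric κ) (f g : ℕ → X) (hf : IsECPath κ f) (hg : IsECPath κ g) :
    (ECHomotopic κ f g →
      ∃ F G : DPath X, TrivExt κ (ecTrunc f) F ∧ TrivExt κ (ecTrunc g) G ∧
        F.len = G.len ∧ PathHomotopic κ F.len F.toFun G.toFun) ∧
    (ECHomotopicFix κ f g →
      ∃ F G : DPath X, TrivExt κ (ecTrunc f) F ∧ TrivExt κ (ecTrunc g) G ∧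
        F.len = G.len ∧ PathHomotopicFix κ F.len F.toFun G.toFun) :=
  ec_homotopic_trunc_trivial_extensions_general κ f g hf hg
end

section
/- Let f and g be loops in a digital image (X,κ) having a common basepoint p. Then there exist trivial extensions f̄ of f and ḡ of g with f̄ homotopic to ḡ holding the endpoints fixed if and only if f_∞ and g_∞ are EC homotopic holding the endpoints fixed. -/
/-!
A trivial extension `f'` of `f` is `f` run with pauses: `f' = f ∘ φ` for some `φ : ℕ → ℕ` with
`φ 0 = 0` and `φ (n + 1) ∈ {φ n, φ n + 1}`. Then `f'_∞` is EC homotopic to `f_∞` holding the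
endpoints fixed through the stages `n ↦ f_∞ (min (φ n + t) n)`, and a homotopy of `f'` and `g'`
extends constantly to an EC homotopy of `f'_∞` and `g'_∞`. Conversely, an EC homotopy holding the
endpoints fixed does not move beyond some `c`, so its restriction to `[0, m]` with `m ≥ c` is a
homotopy between `f` and `g` padded by constant paths to length `m`.
-/

section

variable {X : Type*} {κ : X → X → Prop}

theorem DPath.ext {p q : DPath X} (hlen : p.len = q.len) (hfun : p.toFun = q.toFun) : p = q := by
  cases p; cases q; simp_all

theorem DPath.inf_eq_toFun (p : DPath X) : p.inf = p.toFun := by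
  funext n
  rcases le_total n p.len with h | h
  · simp only [DPath.inf, min_eq_left h]
  · simp only [DPath.inf, min_eq_right h, p.frozen n h]

theorem digCont_natAdj_of_succ {ψ : ℕ → ℕ} (h : ∀ n, ψ (n + 1) ≤ ψ n + 1 ∧ ψ n ≤ ψ (n + 1) + 1) :
    DigCont natAdj natAdj ψ := by
  rintro a b (rfl | rfl)
  · have := h a; unfold natAdj; omega
  · have := h b; unfold natAdj; omega

theorem ECCont.comp {F : ℕ → X} (hF : ECCont κ F) {ψ : ℕ → ℕ} (hψ : DigCont natAdj natAdj ψ) :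
    ECCont κ (F ∘ ψ) := by
  intro a b hab
  rcases hψ a b hab with h | h
  · exact Or.inl (congrArg F h)
  · exact hF _ _ h

theorem ecCont_comp_min {G : ℕ → X} {m : ℕ}
    (hG : ∀ a b, a ≤ m → b ≤ m → natAdj a b → G a = G b ∨ κ (G a) (G b)) :
    ECCont κ fun n => G (min n m) := by
  intro a b hab
  rcases eq_or_ne (min a m) (min b m) with h | h
  · exact Or.inl (congrArg G h)
  · exact hG _ _ (min_le_right _ _) (min_le_right _ _) (by unfold natAdj at hab ⊢; omega)

theorem DPath.IsCont.ecCont_inf {p : DPath X} (hp : p.IsCont κ) : ECCont κ p.inf :=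
  ecCont_comp_min hp

def IsStallMap (φ : ℕ → ℕ) : Prop :=
  φ 0 = 0 ∧ ∀ n, φ (n + 1) = φ n ∨ φ (n + 1) = φ n + 1

namespace IsStallMap

variable {φ ψ : ℕ → ℕ}

theorem id : IsStallMap id := ⟨rfl, fun _ => Or.inr rfl⟩

theorem monotone (hφ : IsStallMap φ) : Monotone φ :=
  monotone_nat_of_le_succ fun n => by rcases hφ.2 n with h | h <;> omega

theorem le_self (hφ : IsStallMap φ) (n : ℕ) : φ n ≤ n := by
  induction n with
  | zero => exact hφ.1.le
  | succ n ih => rcases hφ.2 n with h | h <;> omega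

theorem comp (hφ : IsStallMap φ) (hψ : IsStallMap ψ) : IsStallMap (φ ∘ ψ) := by
  refine ⟨by simp [Function.comp, hψ.1, hφ.1], fun n => ?_⟩
  rcases hψ.2 n with h | h
  · exact Or.inl (by simp [Function.comp, h])
  · simpa [Function.comp, h] using hφ.2 (ψ n)

end IsStallMap

/-- Stage `t` lets `F ∘ φ` catch up `t` steps with `F`: after `N` stages every index is either `n`
itself or at least `N`, where `F` is constant. -/
theorem ecHomotopicFix_comp_stallMap {F : ℕ → X} (hF : ECCont κ F) {N : ℕ}
    (hN : ∀ n, N ≤ n → F n = F N) {φ : ℕ → ℕ} (hφ : IsStallMap φ) {M : ℕ} (hM : N ≤ φ M) :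
    ECHomotopicFix κ (F ∘ φ) F := by
  have h0 : φ 0 = 0 := hφ.1
  have hle := hφ.le_self
  have hlate : ∀ n, max M N ≤ n → N ≤ φ n ∧ N ≤ n := fun n hn =>
    ⟨hM.trans (hφ.monotone (le_of_max_le_left hn)), le_of_max_le_right hn⟩
  have hconst : ∀ i j, N ≤ i → N ≤ j → F i = F j := fun i j hi hj =>
    (hN i hi).trans (hN j hj).symm
  have hstage : ∀ t, DigCont natAdj natAdj fun n => min (φ n + t) n := fun t =>
    digCont_natAdj_of_succ fun n => by rcases hφ.2 n with h | h <;> omega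
  have hpath : ∀ n, DigCont natAdj natAdj fun t => min (φ n + t) n := fun n =>
    digCont_natAdj_of_succ fun t => by omega
  refine ⟨N, fun n t => F (min (φ n + t) n), ⟨fun n => ?_, fun n => ?_, ?_, fun t _ => ?_⟩,
    ⟨by simp [h0], fun t _ => by simp [h0], max M N, fun n hn => ⟨?_, fun t _ => ?_⟩⟩⟩
  · simp [hle n]
  · show F (min (φ n + N) n) = F n
    rcases le_total n (φ n + N) with h | h
    · rw [min_eq_right h]
    · rw [min_eq_left h]; exact hconst _ _ (by omega) (by omega)
  · exact fun n s t _ _ hst => (hF.comp (hpath n)) s t hst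
  · refine ⟨hF.comp (hstage t), max M N, fun n hn => hconst _ _ ?_ ?_⟩
    · have := hlate n hn; omega
    · have := hlate (max M N) le_rfl; omega
  · have := hlate n hn; exact hconst _ _ this.1 this.2
  · have := hlate n hn
    exact hconst _ _ (by omega) this.1

variable {F G K : ℕ → X}

def stackHomotopy (H₁ : ℕ → ℕ → X) (k₁ : ℕ) (H₂ : ℕ → ℕ → X) : ℕ → ℕ → X :=
  fun n t => if t ≤ k₁ then H₁ n t else H₂ n (t - k₁)

theorem IsECHomotopy.trans {k₁ k₂ : ℕ} {H₁ H₂ : ℕ → ℕ → X}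
    (h₁ : IsECHomotopy κ F G k₁ H₁) (h₂ : IsECHomotopy κ G K k₂ H₂) :
    IsECHomotopy κ F K (k₁ + k₂) (stackHomotopy H₁ k₁ H₂) := by
  obtain ⟨a0, ak, as, aₜ⟩ := h₁
  obtain ⟨b0, bk, bs, bt⟩ := h₂
  have seam : ∀ n, H₁ n k₁ = H₂ n 0 := fun n => (ak n).trans (b0 n).symm
  refine ⟨fun n => by simp [stackHomotopy, a0], fun n => ?_, fun n s t hs ht hst => ?_,
    fun t ht => ?_⟩
  · unfold stackHomotopy
    split_ifs with h
    · rw [show k₁ + k₂ = k₁ by omega, ← bk, show k₂ = 0 by omega, seam]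
    · simpa using bk n
  · unfold natAdj at hst
    unfold stackHomotopy
    split_ifs with h₁ h₂ h₂
    · exact as n s t h₁ h₂ hst
    · rw [show s = k₁ by omega, show t - k₁ = 1 by omega, seam]
      exact bs n 0 1 (by omega) (by omega) (Or.inl rfl)
    · rw [show t = k₁ by omega, show s - k₁ = 1 by omega, seam]
      exact bs n 1 0 (by omega) (by omega) (Or.inr rfl)
    · exact bs n _ _ (by omega) (by omega) (by unfold natAdj; omega)
  · unfold stackHomotopy
    split_ifs with h
    · exact aₜ t h
    · exact bt _ (by omega)

namespace ECHomotopicFix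

theorem symm (h : ECHomotopicFix κ F G) : ECHomotopicFix κ G F := by
  obtain ⟨k, H, ⟨h0, hk, hs, ht⟩, ⟨e0, e, c, hc⟩⟩ := h
  refine ⟨k, fun n t => H n (k - t), ⟨fun n => ?_, fun n => ?_, ?_, fun t ht' => ht _ (by omega)⟩,
    ⟨e0.symm, fun t ht' => (e _ (by omega)).trans e0, c, fun n hn => ?_⟩⟩
  · simpa using hk n
  · simpa using h0 n
  · intro n s t hsk htk hst
    exact hs n _ _ (by omega) (by omega) (by unfold natAdj at hst ⊢; omega)
  · obtain ⟨hFG, hH⟩ := hc n hn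
    exact ⟨hFG.symm, fun t ht' => (hH _ (by omega)).trans hFG⟩

theorem trans (h₁ : ECHomotopicFix κ F G) (h₂ : ECHomotopicFix κ G K) : ECHomotopicFix κ F K := by
  obtain ⟨k₁, H₁, hH₁, ⟨a0, a, c₁, ac⟩⟩ := h₁
  obtain ⟨k₂, H₂, hH₂, ⟨b0, b, c₂, bc⟩⟩ := h₂
  refine ⟨k₁ + k₂, stackHomotopy H₁ k₁ H₂, hH₁.trans hH₂, ⟨a0.trans b0, fun t ht => ?_, max c₁ c₂,
    fun n hn => ⟨(ac n (le_of_max_le_left hn)).1.trans (bc n (le_of_max_le_right hn)).1,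
      fun t ht => ?_⟩⟩⟩ <;> unfold stackHomotopy <;> split_ifs with h
  · exact a t h
  · exact (b _ (by omega)).trans a0.symm
  · exact (ac n (le_of_max_le_left hn)).2 t h
  · exact ((bc n (le_of_max_le_right hn)).2 _ (by omega)).trans (ac n (le_of_max_le_left hn)).1.symm

theorem exists_pathHomotopicFix_s11 (h : ECHomotopicFix κ F G) :
    ∃ c, ∀ m, c ≤ m → PathHomotopicFix κ m F G := by
  obtain ⟨k, H, ⟨h0, hk, hs, ht⟩, ⟨e0, e, c, hc⟩⟩ := h
  refine ⟨c, fun m hm => ⟨k, H, ⟨fun t _ => h0 t, fun t _ => hk t, fun t _ => hs t,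
    fun s hs' t₁ t₂ _ _ => (ht s hs').1 t₁ t₂⟩, ⟨e0, (hc m hm).1, fun s hs' => ⟨e s hs', ?_⟩⟩⟩⟩
  exact (hc m hm).2 s hs'

end ECHomotopicFix

theorem DPath.ecHomotopicFix_inf_of_pathHomotopicFix {p q : DPath X} (hlen : p.len = q.len)
    (h : PathHomotopicFix κ p.len p.toFun q.toFun) : ECHomotopicFix κ p.inf q.inf := by
  obtain ⟨k, H, ⟨h0, hk, hs, ht⟩, ⟨e0, em, e⟩⟩ := h
  refine ⟨k, fun n t => H (min n p.len) t, ⟨fun n => h0 _ (min_le_right _ _), fun n => ?_,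
    fun n => hs _ (min_le_right _ _), fun t hkt => ⟨ecCont_comp_min (ht t hkt), p.len, ?_⟩⟩,
    ⟨by simpa [DPath.inf] using e0, fun t hkt => by simpa [DPath.inf] using (e t hkt).1, p.len,
      fun n hn => ⟨?_, fun t hkt => ?_⟩⟩⟩
  · simpa [DPath.inf, hlen] using hk _ (min_le_right n p.len)
  · intro n hn; simp [min_eq_right hn]
  · simpa [DPath.inf, min_eq_right hn, ← hlen, min_eq_right (hlen ▸ hn)] using em
  · simpa [DPath.inf, min_eq_right hn] using (e t hkt).2

def IsStalling (f f' : DPath X) : Prop :=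
  ∃ φ, IsStallMap φ ∧ φ f'.len = f.len ∧ f'.toFun = f.toFun ∘ φ

namespace IsStalling

theorem refl (f : DPath X) : IsStalling f f := ⟨id, IsStallMap.id, rfl, rfl⟩

theorem trans {f g h : DPath X} (hfg : IsStalling f g) (hgh : IsStalling g h) : IsStalling f h := by
  obtain ⟨φ, hφ, hφlen, hφfun⟩ := hfg
  obtain ⟨ψ, hψ, hψlen, hψfun⟩ := hgh
  exact ⟨φ ∘ ψ, hφ.comp hψ, by simp [hψlen, hφlen], by rw [hψfun, hφfun]; rfl⟩

theorem concat_const {p c : DPath X} (hc : IsConstPath c) (hpc : p.toFun p.len = c.toFun 0) :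
    IsStalling p (p.concat c) := by
  refine ⟨fun n => min n p.len, ⟨by simp, fun n => by dsimp only; omega⟩,
    by simp [DPath.concat], ?_⟩
  funext n
  simp only [DPath.concat, Function.comp]
  split_ifs with h
  · rw [min_eq_left h.le]
  · rw [min_eq_right (not_lt.mp h), hc, hpc]

theorem concat_left {p p' q : DPath X} (h : IsStalling p p') (hpq : p.toFun p.len = q.toFun 0) :
    IsStalling (p.concat q) (p'.concat q) := by
  obtain ⟨φ, hφ, hlen, hfun⟩ := h
  have hle : ∀ n, n ≤ p'.len → φ n ≤ p.len := fun n hn => hlen ▸ hφ.monotone hn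
  refine ⟨fun n => if n < p'.len then φ n else p.len + (n - p'.len), ⟨?_, fun n => ?_⟩, ?_, ?_⟩
  · dsimp only
    split_ifs with h
    · exact hφ.1
    · rw [← hlen, show p'.len = 0 by omega, hφ.1]
  · rcases lt_trichotomy (n + 1) p'.len with h | h | h
    · simpa [h, show n < p'.len by omega] using hφ.2 n
    · have hend : φ (n + 1) = p.len := h ▸ hlen
      simpa [show n < p'.len by omega, ← h, hend, eq_comm] using hφ.2 n
    · simp only [show ¬ n < p'.len by omega, show ¬ n + 1 < p'.len by omega, if_false]
      omega
  · simp [DPath.concat]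
  · funext n
    simp only [DPath.concat, Function.comp, hfun]
    by_cases hn : n < p'.len
    · simp only [hn, if_true]
      rcases (hle n hn.le).lt_or_eq with h | h
      · simp [h]
      · simp [h, hpq]
    · simp [hn]

end IsStalling

theorem ChainOK.tail {p : DPath X} {L : List (DPath X)} (h : ChainOK (p :: L)) : ChainOK L :=
  List.IsChain.tail h

theorem ChainOK.toFun_len_eq {p q : DPath X} {L : List (DPath X)} (h : ChainOK (p :: q :: L)) :
    p.toFun p.len = q.toFun 0 :=
  (List.isChain_cons_cons.mp h).1

theorem ChainOK.concat {p c : DPath X} {L : List (DPath X)} (h : ChainOK (p :: c :: L)) :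
    ChainOK (p.concat c :: L) := by
  cases L with
  | nil => exact List.isChain_singleton _
  | cons d L =>
    have hend : (p.concat c).toFun (p.concat c).len = c.toFun c.len := by
      simp [DPath.concat]
    exact List.isChain_cons_cons.mpr ⟨hend.trans h.tail.toFun_len_eq, h.tail.tail⟩

inductive ConstPadding : List (DPath X) → List (DPath X) → Prop
  | nil : ConstPadding [] []
  | keep (p : DPath X) {L L' : List (DPath X)} : ConstPadding L L' → ConstPadding (p :: L) (p :: L')
  | pad {c : DPath X} {L L' : List (DPath X)} :
      IsConstPath c → ConstPadding L L' → ConstPadding L (c :: L')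

theorem constPadding_of_strictMono : ∀ {L' L : List (DPath X)} {idx : Fin L.length → Fin L'.length},
    StrictMono idx → (∀ j, L'.get (idx j) = L.get j) →
    (∀ i, (∀ j, idx j ≠ i) → IsConstPath (L'.get i)) → ConstPadding L L'
  | [], [], _, _, _, _ => .nil
  | [], _ :: _, idx, _, _, _ => (idx ⟨0, Nat.succ_pos _⟩).elim0
  | c :: L', L, idx, hmono, hget, hconst => by
    by_cases hmiss : ∀ j, idx j ≠ 0
    · refine .pad (hconst 0 hmiss)
        (constPadding_of_strictMono (idx := fun j => (idx j).pred (hmiss j)) ?_ ?_ ?_)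
      · exact fun i j hij => Fin.pred_lt_pred_iff.mpr (hmono hij)
      · intro j
        have h := hget j
        rw [← Fin.succ_pred (idx j) (hmiss j)] at h
        exact h
      · intro i hi
        exact hconst i.succ fun j hj => hi j (by simp [hj])
    · obtain ⟨j₀, hj₀⟩ := not_forall_not.mp hmiss
      cases L with
      | nil => exact j₀.elim0
      | cons a L =>
        have h00 : idx 0 = 0 := le_antisymm (hj₀ ▸ hmono.monotone (Fin.zero_le j₀)) (Fin.zero_le _)
        obtain rfl : c = a := by simpa [h00] using hget 0
        have hhit : ∀ j : Fin L.length, idx j.succ ≠ 0 := fun j =>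
          (h00 ▸ hmono (Fin.succ_pos j)).ne'
        refine .keep c
          (constPadding_of_strictMono (idx := fun j => (idx j.succ).pred (hhit j)) ?_ ?_ ?_)
        · exact fun i j hij => Fin.pred_lt_pred_iff.mpr (hmono (Fin.succ_lt_succ_iff.mpr hij))
        · intro j
          have h := hget j.succ
          rw [← Fin.succ_pred (idx j.succ) (hhit j)] at h
          exact h
        · intro i hi
          refine hconst i.succ fun j hj => ?_
          cases j using Fin.cases with
          | zero => exact Fin.succ_ne_zero i (hj ▸ h00)
          | succ j => exact hi j (by simp [hj])

theorem ConstPadding.isStalling_concatAll {L L' : List (DPath X)} (h : ConstPadding L L') :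
    ∀ {p q : DPath X}, ChainOK (p :: L) → ChainOK (q :: L') → IsStalling p q →
      IsStalling (concatAll p L) (concatAll q L') := by
  induction h with
  | nil => exact fun _ _ hpq => hpq
  | keep x _ ih => exact fun hp hq hpq => ih hp.concat hq.concat (hpq.concat_left hp.toFun_len_eq)
  | pad hc _ ih =>
    exact fun hp hq hpq => ih hp hq.concat (hpq.trans (.concat_const hc hq.toFun_len_eq))

theorem ConstPadding.exists_head_start {L L' : List (DPath X)} (h : ConstPadding L L')
    (hL' : ChainOK L') : ∀ a ∈ L.head?, ∃ b ∈ L'.head?, b.toFun 0 = a.toFun 0 := by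
  induction h with
  | nil => simp
  | keep x _ _ => intro a ha; exact ⟨x, rfl, by simp_all⟩
  | @pad c L L' hc _ ih =>
    intro a ha
    obtain ⟨b, hb, hba⟩ := ih hL'.tail a ha
    cases L' with
    | nil => simp at hb
    | cons d L' =>
      obtain rfl : d = b := by simpa using hb
      exact ⟨c, rfl, (hc c.len).symm.trans (hL'.toFun_len_eq.trans hba)⟩

def constPath (x : X) (r : ℕ) : DPath X := ⟨r, fun _ => x, fun _ _ => rfl⟩

theorem concatAll_constPath_zero (p : DPath X) (L : List (DPath X)) :
    concatAll (constPath (p.toFun 0) 0) (p :: L) = concatAll p L := by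
  have h : (constPath (p.toFun 0) 0).concat p = p := DPath.ext (by simp [DPath.concat, constPath])
    (by funext t; simp [DPath.concat, constPath])
  simp only [concatAll, List.foldl_cons, h]

theorem TrivExt.isStalling {f f' : DPath X} (h : TrivExt κ f f') : IsStalling f f' := by
  obtain ⟨a, fs, b, Fs, -, -, hL, hL', rfl, rfl, idx, hmono, hget, hconst⟩ := h
  have hpad := constPadding_of_strictMono hmono hget hconst
  obtain ⟨b', hb', hstart⟩ := hpad.exists_head_start hL' a rfl
  obtain rfl : b = b' := by simpa using hb'
  -- a length-0 first factor makes both paths products over the whole lists `a :: fs`, `b :: Fs`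
  rw [← concatAll_constPath_zero a, ← concatAll_constPath_zero b, hstart]
  exact hpad.isStalling_concatAll (List.isChain_cons_cons.mpr ⟨rfl, hL⟩)
    (List.isChain_cons_cons.mpr ⟨hstart.symm, hL'⟩) (.refl _)

theorem IsStalling.ecHomotopicFix_inf {f f' : DPath X} (hf : f.IsCont κ) (h : IsStalling f f') :
    ECHomotopicFix κ f'.inf f.inf := by
  obtain ⟨φ, hφ, hlen, hfun⟩ := h
  have hcomp : f'.inf = f.inf ∘ φ := by rw [DPath.inf_eq_toFun, DPath.inf_eq_toFun, hfun]
  rw [hcomp]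
  exact ecHomotopicFix_comp_stallMap hf.ecCont_inf (fun n hn => by simp [DPath.inf, hn]) hφ
    hlen.ge

def DPath.padEnd (p : DPath X) (r : ℕ) : DPath X := p.concat (constPath (p.toFun p.len) r)

theorem DPath.padEnd_len (p : DPath X) (r : ℕ) : (p.padEnd r).len = p.len + r := rfl

theorem DPath.padEnd_toFun (p : DPath X) (r : ℕ) : (p.padEnd r).toFun = p.inf := by
  funext n
  simp only [DPath.padEnd, DPath.concat, constPath, DPath.inf]
  split_ifs with h
  · rw [min_eq_left h.le]
  · rw [min_eq_right (not_lt.mp h)]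

theorem DPath.IsCont.trivExt_padEnd {p : DPath X} (hp : p.IsCont κ) (r : ℕ) :
    TrivExt κ p (p.padEnd r) := by
  refine ⟨p, [], p, [constPath (p.toFun p.len) r], by simpa using hp, ?_,
    List.isChain_singleton p, List.isChain_cons_cons.mpr ⟨rfl, List.isChain_singleton _⟩,
    rfl, rfl, fun _ => 0, fun i j hij => by fin_cases i; fin_cases j; simp at hij, fun j => ?_,
    fun i hi => ?_⟩
  · simpa using ⟨hp, fun _ _ _ _ _ => Or.inl rfl⟩
  · fin_cases j; rfl
  · fin_cases i
    · exact absurd rfl (hi 0)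
    · exact fun _ => rfl

end

theorem trivial_extensions_iff_ec_homotopic_general {X : Type*} (κ : X → X → Prop)
    (f g : DPath X)
    (hf : f.IsCont κ) (hg : g.IsCont κ) :
    (∃ f' g' : DPath X, TrivExt κ f f' ∧ TrivExt κ g g' ∧ f'.len = g'.len ∧
       PathHomotopicFix κ f'.len f'.toFun g'.toFun) ↔
    ECHomotopicFix κ f.inf g.inf := by
  constructor
  · rintro ⟨f', g', hf', hg', hlen, hpath⟩
    exact ((hf'.isStalling.ecHomotopicFix_inf hf).symm.trans
      (DPath.ecHomotopicFix_inf_of_pathHomotopicFix hlen hpath)).trans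
      (hg'.isStalling.ecHomotopicFix_inf hg)
  · intro h
    obtain ⟨c, hc⟩ := h.exists_pathHomotopicFix_s11
    have hlen : f.len + (c + g.len) = g.len + (c + f.len) := by omega
    refine ⟨f.padEnd (c + g.len), g.padEnd (c + f.len), hf.trivExt_padEnd _, hg.trivExt_padEnd _,
      hlen, ?_⟩
    rw [DPath.padEnd_toFun, DPath.padEnd_toFun, DPath.padEnd_len]
    exact hc _ (by omega)

/-- Loops `f`, `g` at a common basepoint `b` have trivial extensions
that are homotopic holding the endpoints fixed iff `f_∞` and `g_∞` are EC homotopic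
holding the endpoints fixed. -/
theorem trivial_extensions_iff_ec_homotopic {X : Type*} (κ : X → X → Prop)
    (hκ : Symmetric κ) (b : X) (f g : DPath X)
    (hf : f.IsCont κ) (hg : g.IsCont κ)
    (hf0 : f.toFun 0 = b) (hfm : f.toFun f.len = b)
    (hg0 : g.toFun 0 = b) (hgm : g.toFun g.len = b) :
    (∃ f' g' : DPath X, TrivExt κ f f' ∧ TrivExt κ g g' ∧ f'.len = g'.len ∧
       PathHomotopicFix κ f'.len f'.toFun g'.toFun) ↔
    ECHomotopicFix κ f.inf g.inf :=
  trivial_extensions_iff_ec_homotopic_general κ f g hf hg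
end

section
/- Let f, g, g' be EC loops in a digital image (X,κ) at a common basepoint, with g EC homotopic to g' holding the endpoints fixed. Then f * g is EC homotopic to f * g' holding the endpoints fixed. -/
/-- The product `f * g` of EC loops. -/
noncomputable def ecStar {X : Type*} (f g : ℕ → X) : ℕ → X :=
  fun n => if n ≤ ecN f then f n else g (n - ecN f)

/-- An EC loop based at `x₀`: an EC path with `f(0) = f(∞) = x₀`. -/
def IsECLoop {X : Type*} (κ : X → X → Prop) (x₀ : X) (f : ℕ → X) : Prop :=
  IsECPath κ f ∧ f 0 = x₀ ∧ ∃ N, ∀ n, N ≤ n → f n = x₀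

/-!
The homotopy runs `f` unchanged up to `N_f` and then the given homotopy `H` from `g` to `g'`.
The seam is harmless because every stage of `H` starts at `g 0 = x₀ = f (N_f)`, and each
adjacent pair of times lies on one side of the seam, so continuity is inherited piecewise.
-/

section

variable {X : Type*} {κ : X → X → Prop}

def ecSplice (N : ℕ) (f q : ℕ → X) : ℕ → X :=
  fun n => if n ≤ N then f n else q (n - N)

theorem ecStar_eq_ecSplice (f g : ℕ → X) : ecStar f g = ecSplice (ecN f) f g := rfl

section

variable {N : ℕ} {f q : ℕ → X}

theorem ecSplice_of_le {n : ℕ} (hn : n ≤ N) : ecSplice N f q n = f n := if_pos hn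

theorem ecSplice_of_lt {n : ℕ} (hn : N < n) : ecSplice N f q n = q (n - N) :=
  if_neg (Nat.not_le.mpr hn)

theorem ecSplice_of_ge (hjoin : f N = q 0) {n : ℕ} (hn : N ≤ n) :
    ecSplice N f q n = q (n - N) := by
  rcases hn.eq_or_lt with rfl | hlt
  · rw [ecSplice_of_le le_rfl, Nat.sub_self, hjoin]
  · exact ecSplice_of_lt hlt

theorem ECCont.ecSplice (hf : ECCont κ f) (hq : ECCont κ q) (hjoin : f N = q 0) :
    ECCont κ (ecSplice N f q) := by
  intro a b hab
  have hclose : b ≤ a + 1 ∧ a ≤ b + 1 := by unfold natAdj at hab; omega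
  by_cases ha : a ≤ N ∧ b ≤ N
  · rw [ecSplice_of_le ha.1, ecSplice_of_le ha.2]
    exact hf a b hab
  · have hNa : N ≤ a := by omega
    have hNb : N ≤ b := by omega
    rw [ecSplice_of_ge hjoin hNa, ecSplice_of_ge hjoin hNb]
    exact hq _ _ (by unfold natAdj at hab ⊢; omega)

theorem ecSplice_eventually_const (hq : ∃ M, ∀ n, M ≤ n → q n = q M) :
    ∃ M, ∀ n, M ≤ n → ecSplice N f q n = ecSplice N f q M := by
  obtain ⟨M, hM⟩ := hq
  refine ⟨N + M + 1, fun n hn => ?_⟩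
  rw [ecSplice_of_lt (by omega), ecSplice_of_lt (by omega), hM (n - N) (by omega),
    hM (N + M + 1 - N) (by omega)]

theorem IsECPath.ecSplice (hf : ECCont κ f) (hq : IsECPath κ q) (hjoin : f N = q 0) :
    IsECPath κ (ecSplice N f q) :=
  ⟨hf.ecSplice hq.1 hjoin, ecSplice_eventually_const hq.2⟩

end

theorem ecN_spec {f : ℕ → X} (hf : ∃ N, ∀ n, N ≤ n → f n = f N) :
    ∀ n, ecN f ≤ n → f n = f (ecN f) :=
  Nat.sInf_mem (s := {m | ∀ n, m ≤ n → f n = f m}) hf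

theorem IsECLoop.apply_ecN {x₀ : X} {f : ℕ → X} (hf : IsECLoop κ x₀ f) : f (ecN f) = x₀ := by
  obtain ⟨M, hM⟩ := hf.2.2
  rw [← ecN_spec hf.1.2 (max (ecN f) M) (le_max_left _ _), hM _ (le_max_right _ _)]

section homotopy

variable {N k : ℕ} {f g g' : ℕ → X} {H : ℕ → ℕ → X}

theorem IsECHomotopy.ecSplice (hf : ECCont κ f) (hH : IsECHomotopy κ g g' k H)
    (hjoin : ∀ t ≤ k, f N = H 0 t) :
    IsECHomotopy κ (ecSplice N f g) (ecSplice N f g') k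
      (fun n t => ecSplice N f (H · t) n) := by
  obtain ⟨H0, Hk, Hcont, Hstage⟩ := hH
  refine ⟨fun n => ?_, fun n => ?_, fun n s t hs ht hst => ?_,
    fun t ht => (Hstage t ht).ecSplice hf (hjoin t ht)⟩
  · simp only [_root_.ecSplice, H0]
  · simp only [_root_.ecSplice, Hk]
  · by_cases hn : n ≤ N
    · simp only [ecSplice_of_le hn, true_or]
    · simp only [ecSplice_of_lt (Nat.lt_of_not_le hn)]
      exact Hcont _ s t hs ht hst

theorem ECHoldsEnds.ecSplice (hH : ECHoldsEnds g g' k H) :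
    ECHoldsEnds (ecSplice N f g) (ecSplice N f g') k (fun n t => ecSplice N f (H · t) n) := by
  obtain ⟨-, -, c, hc⟩ := hH
  refine ⟨rfl, fun t _ => rfl, N + c + 1, fun n hn => ?_⟩
  simp only [ecSplice_of_lt (show N < n by omega)]
  exact hc (n - N) (by omega)

end homotopy

end

theorem ec_star_left_congr_general {X : Type*} (κ : X → X → Prop)
    (x₀ : X) (f g g' : ℕ → X)
    (hf : IsECLoop κ x₀ f) (hg : IsECLoop κ x₀ g)
    (h : ECHomotopicFix κ g g') :
    ECHomotopicFix κ (ecStar f g) (ecStar f g') := by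
  obtain ⟨k, H, hH, hends⟩ := h
  have hjoin : ∀ t ≤ k, f (ecN f) = H 0 t := fun t ht => by
    rw [hends.2.1 t ht, hg.2.1, hf.apply_ecN]
  rw [ecStar_eq_ecSplice, ecStar_eq_ecSplice]
  exact ⟨k, _, hH.ecSplice hf.1.1 hjoin, hends.ecSplice⟩

/-- If `g` and `g'` are EC homotopic holding the endpoints fixed,
then `f * g` and `f * g'` are EC homotopic holding the endpoints fixed. -/
theorem ec_star_left_congr {X : Type*} (κ : X → X → Prop) (hκ : Symmetric κ)
    (x₀ : X) (f g g' : ℕ → X)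
    (hf : IsECLoop κ x₀ f) (hg : IsECLoop κ x₀ g) (hg' : IsECLoop κ x₀ g')
    (h : ECHomotopicFix κ g g') :
    ECHomotopicFix κ (ecStar f g) (ecStar f g') :=
  ec_star_left_congr_general κ x₀ f g g' hf hg h
end

section
/- Let (X,κ) be a digital image and x_0 ∈ X. Let G(X,x_0) be the set of equivalence classes of x_0-based EC loops in X under EC homotopy holding the endpoints fixed. Then G(X,x_0) with the operation [f]·[g] = [f*g] is a group: the operation is well defined and associative, the class of the constant EC loop at x_0 is an identity element, and for each EC loop f the EC loop g defined by g(n) = f(N_f − n) for 0 ≤ n ≤ N_f and g(n) = x_0 for n ≥ N_f represents an inverse of [f]. -/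
/-- The reverse of an EC loop: `g(n) = f(N_f - n)` for `n ≤ N_f`, `x₀` afterwards. -/
noncomputable def ecRev {X : Type*} (x₀ : X) (f : ℕ → X) : ℕ → X :=
  fun n => if n ≤ ecN f then f (ecN f - n) else x₀


namespace ECAux

variable {X : Type*} {κ : X → X → Prop} {x₀ : X} {f g h : ℕ → X}

lemma cont_step (hc : ECCont κ f) {i j : ℕ} (hij : natAdj i j ∨ i = j) :
    f i = f j ∨ κ (f i) (f j) := by
  rcases hij with hij | rfl
  · exact hc i j hij
  · exact Or.inl rfl

lemma ecCont_succ (hκ : Symmetric κ)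
    (hs : ∀ n, f n = f (n+1) ∨ κ (f n) (f (n+1))) : ECCont κ f := by
  intro a b hab
  rcases hab with rfl | rfl
  · exact hs a
  · exact (hs b).imp Eq.symm (fun hh => hκ hh)

lemma tcont_of_succ (hκ : Symmetric κ) {H : ℕ → ℕ → X} {k : ℕ}
    (hs : ∀ n t, t + 1 ≤ k → H n t = H n (t+1) ∨ κ (H n t) (H n (t+1))) :
    ∀ n s t, s ≤ k → t ≤ k → natAdj s t → H n s = H n t ∨ κ (H n s) (H n t) := by
  intro n s t hsk htk hst
  rcases hst with rfl | rfl
  · exact hs n s htk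
  · exact (hs n t hsk).imp Eq.symm (fun hh => hκ hh)

lemma loop_x0 (hf : IsECLoop κ x₀ f) : ∀ n, ecN f ≤ n → f n = x₀ := by
  obtain ⟨⟨_, _⟩, h0, N, hN⟩ := hf
  have hNmem : N ∈ {m | ∀ n, m ≤ n → f n = f m} := by
    intro n hn; rw [hN n hn, hN N le_rfl]
  have hmem : ∀ n, ecN f ≤ n → f n = f (ecN f) := Nat.sInf_mem ⟨N, hNmem⟩
  intro n hn
  have h1 : f (max n N) = f (ecN f) := hmem _ (le_trans hn (le_max_left _ _))
  have h2 : f (max n N) = x₀ := hN _ (le_max_right _ _)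
  rw [hmem n hn, ← h1, h2]

lemma loop_adj01 (hf : IsECLoop κ x₀ g) : g 0 = g 1 ∨ κ (g 0) (g 1) :=
  hf.1.1 0 1 (Or.inl rfl)

lemma const_loop : IsECLoop κ x₀ (fun _ => x₀) :=
  ⟨⟨fun _ _ _ => Or.inl rfl, 0, fun _ _ => rfl⟩, rfl, 0, fun _ _ => rfl⟩

/-- split-at-`M` product. -/
noncomputable def pS (M : ℕ) (f g : ℕ → X) : ℕ → X :=
  fun n => if n ≤ M then f n else g (n - M)

lemma ecStar_eq_pS : ecStar f g = pS (ecN f) f g := rfl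

lemma pS_tail (hf : IsECLoop κ x₀ f) (hg : IsECLoop κ x₀ g) {M : ℕ} (hM : ecN f ≤ M) :
    ∀ n, M + ecN g ≤ n → pS M f g n = x₀ := by
  intro n hn
  unfold pS
  by_cases h1 : n ≤ M
  · rw [if_pos h1]; exact loop_x0 hf n (by omega)
  · rw [if_neg h1]; exact loop_x0 hg _ (by omega)

lemma pS_loop (hκ : Symmetric κ) (hf : IsECLoop κ x₀ f) (hg : IsECLoop κ x₀ g)
    {M : ℕ} (hM : ecN f ≤ M) : IsECLoop κ x₀ (pS M f g) := by
  have hcont : ECCont κ (pS M f g) := by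
    apply ecCont_succ hκ
    intro n
    unfold pS
    by_cases h1 : n + 1 ≤ M
    · rw [if_pos (by omega), if_pos h1]
      exact hf.1.1 n (n+1) (Or.inl rfl)
    · by_cases h2 : n ≤ M
      · rw [if_pos h2, if_neg h1]
        have hnM : n = M := by omega
        subst hnM
        have e1 : f n = x₀ := loop_x0 hf n hM
        have e2 : n + 1 - n = 1 := by omega
        rw [e1, e2]
        have h01 := loop_adj01 hg
        rwa [hg.2.1] at h01
      · rw [if_neg h2, if_neg h1]
        have e : n + 1 - M = (n - M) + 1 := by omega
        rw [e]
        exact hg.1.1 _ _ (Or.inl rfl)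
  refine ⟨⟨hcont, M + ecN g, fun n hn => ?_⟩, ?_, M + ecN g, pS_tail hf hg hM⟩
  · rw [pS_tail hf hg hM n hn, pS_tail hf hg hM _ le_rfl]
  · show (if 0 ≤ M then f 0 else g (0 - M)) = x₀
    rw [if_pos (Nat.zero_le _)]
    exact hf.2.1



lemma ecStar_const_right (hf : IsECLoop κ x₀ f) (hx : ∀ n, g n = x₀) :
    ecStar f g = f := by
  funext n
  unfold ecStar
  by_cases h1 : n ≤ ecN f
  · rw [if_pos h1]
  · rw [if_neg h1, hx]
    exact (loop_x0 hf n (by omega)).symm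

lemma ecN_const_zero : ecN (fun _ : ℕ => x₀) = 0 :=
  Nat.sInf_eq_zero.mpr (Or.inl (fun _ _ => rfl))

lemma ecStar_const_left (hf : IsECLoop κ x₀ f) :
    ecStar (fun _ => x₀) f = f := by
  funext n
  unfold ecStar
  rw [ecN_const_zero]
  by_cases h1 : n ≤ 0
  · rw [if_pos h1]
    have hn0 : n = 0 := by omega
    rw [hn0]
    exact hf.2.1.symm
  · rw [if_neg h1]
    congr 1

lemma ecN_ecStar (hf : IsECLoop κ x₀ f) (hg : IsECLoop κ x₀ g) :
    ecN (ecStar f g) = ecN f + ecN g := by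
  rcases Nat.eq_zero_or_pos (ecN g) with h0 | hpos
  · rw [ecStar_const_right hf (fun n => loop_x0 hg n (by omega)), h0]
    omega
  · have hne : g (ecN g - 1) ≠ x₀ := by
      have hnm : (ecN g - 1) ∉ {m | ∀ n, m ≤ n → g n = g m} :=
        Nat.notMem_of_lt_sInf (show ecN g - 1 < ecN g by omega)
      intro hx
      apply hnm
      intro n hn
      rcases Nat.lt_or_ge n (ecN g) with hlt | hge
      · have : n = ecN g - 1 := by omega
        rw [this]
      · rw [loop_x0 hg n hge, hx]
    have h2 : 2 ≤ ecN g := by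
      by_contra hcon
      have he1 : ecN g = 1 := by omega
      rw [he1] at hne
      exact hne hg.2.1
    have htail : ∀ n, ecN f + ecN g ≤ n → ecStar f g n = x₀ :=
      pS_tail hf hg le_rfl
    have hval : ecStar f g (ecN f + ecN g - 1) = g (ecN g - 1) := by
      unfold ecStar
      rw [if_neg (by omega)]
      congr 1
      omega
    have hmemA : (ecN f + ecN g) ∈
        {m | ∀ n, m ≤ n → ecStar f g n = ecStar f g m} := by
      intro n hn
      rw [htail n hn, htail _ le_rfl]
    refine le_antisymm (Nat.sInf_le hmemA) ?_
    by_contra hcon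
    push_neg at hcon
    have hm : ∀ n, ecN (ecStar f g) ≤ n → ecStar f g n = ecStar f g (ecN (ecStar f g)) :=
      Nat.sInf_mem ⟨_, hmemA⟩
    have e1 := hm (ecN f + ecN g - 1) (by omega)
    have e2 := hm (ecN f + ecN g) (by omega)
    rw [htail _ le_rfl] at e2
    rw [hval, ← e2] at e1
    exact hne e1

lemma ecStar_assoc (hf : IsECLoop κ x₀ f) (hg : IsECLoop κ x₀ g) (hh : IsECLoop κ x₀ h) :
    ecStar (ecStar f g) h = ecStar f (ecStar g h) := by
  have e1 := ecN_ecStar hf hg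
  have e2 := ecN_ecStar hg hh
  funext n
  simp only [ecStar] at e1 e2 ⊢
  rw [e1]
  split_ifs <;> first | rfl | (exfalso; omega) | (congr 1; omega)

lemma homFix_refl (hf : IsECPath κ f) : ECHomotopicFix κ f f :=
  ⟨0, fun n _ => f n,
    ⟨fun _ => rfl, fun _ => rfl, fun _ _ _ _ _ _ => Or.inl rfl, fun _ _ => hf⟩,
    rfl, fun _ _ => rfl, 0, fun _ _ => ⟨rfl, fun _ _ => rfl⟩⟩

lemma homFix_of_eq (hf : IsECPath κ f) (hfg : f = g) : ECHomotopicFix κ f g := by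
  subst hfg; exact homFix_refl hf

lemma homFix_symm (hκ : Symmetric κ) (hfg : ECHomotopicFix κ f g) :
    ECHomotopicFix κ g f := by
  obtain ⟨k, H, ⟨h0, hk, hT, hS⟩, he0, heT, c, hc⟩ := hfg
  refine ⟨k, fun n t => H n (k - t),
    ⟨fun n => by simpa using hk n, fun n => by simpa using h0 n, ?_,
      fun t ht => hS (k - t) (by omega)⟩,
    he0.symm, fun t ht => (heT (k - t) (by omega)).trans he0,
    c, fun n hn => ⟨(hc n hn).1.symm, fun t ht => by
      show H n (k - t) = g n
      rw [(hc n hn).2 (k - t) (by omega), (hc n hn).1]⟩⟩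
  intro n s t hsk htk hst
  exact hT n (k - s) (k - t) (by omega) (by omega) (by unfold natAdj at hst ⊢; omega)

lemma homFix_trans (hκ : Symmetric κ) (h1 : ECHomotopicFix κ f g)
    (h2 : ECHomotopicFix κ g h) : ECHomotopicFix κ f h := by
  obtain ⟨k1, H1, ⟨a0, ak, aT, aS⟩, ae0, aeT, c1, ac⟩ := h1
  obtain ⟨k2, H2, ⟨b0, bk, bT, bS⟩, be0, beT, c2, bc⟩ := h2
  refine ⟨k1 + k2, fun n t => if t ≤ k1 then H1 n t else H2 n (t - k1),
    ⟨fun n => by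
      show (if (0:ℕ) ≤ k1 then H1 n 0 else H2 n (0 - k1)) = f n
      rw [if_pos (Nat.zero_le _)]; exact a0 n, ?_, ?_, ?_⟩, ?_, ?_, ?_⟩
  · intro n
    show (if k1 + k2 ≤ k1 then H1 n (k1 + k2) else H2 n (k1 + k2 - k1)) = h n
    by_cases hk : k1 + k2 ≤ k1
    · have hk2 : k2 = 0 := by omega
      have hb := bk n
      rw [hk2] at hb
      rw [if_pos hk, show k1 + k2 = k1 by omega, ak n, ← b0 n]
      exact hb
    · rw [if_neg hk, show k1 + k2 - k1 = k2 by omega]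
      exact bk n
  · apply tcont_of_succ hκ
    intro n t ht
    by_cases hA : t + 1 ≤ k1
    · rw [if_pos (by omega), if_pos hA]
      exact aT n t (t+1) (by omega) hA (Or.inl rfl)
    · by_cases hB : t ≤ k1
      · have htk1 : t = k1 := by omega
        rw [if_pos hB, if_neg hA, htk1, show k1 + 1 - k1 = 1 by omega, ak n, ← b0 n]
        exact bT n 0 1 (Nat.zero_le _) (by omega) (Or.inl rfl)
      · rw [if_neg hB, if_neg hA, show t + 1 - k1 = (t - k1) + 1 by omega]
        exact bT n (t - k1) (t - k1 + 1) (by omega) (by omega) (Or.inl rfl)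
  · intro t ht
    by_cases hB : t ≤ k1
    · simp only [if_pos hB]
      exact aS t hB
    · simp only [if_neg hB]
      exact bS (t - k1) (by omega)
  · exact ae0.trans be0
  · intro t ht
    show (if t ≤ k1 then H1 0 t else H2 0 (t - k1)) = f 0
    by_cases hB : t ≤ k1
    · rw [if_pos hB]; exact aeT t hB
    · rw [if_neg hB, beT (t - k1) (by omega), ← ae0]
  · refine ⟨max c1 c2, fun n hn => ⟨(ac n (by omega)).1.trans (bc n (by omega)).1, ?_⟩⟩
    intro t ht
    show (if t ≤ k1 then H1 n t else H2 n (t - k1)) = f n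
    by_cases hB : t ≤ k1
    · rw [if_pos hB]; exact (ac n (by omega)).2 t hB
    · rw [if_neg hB, (bc n (by omega)).2 (t - k1) (by omega), ← (ac n (by omega)).1]

lemma star_congr_right (hκ : Symmetric κ) (hf : IsECLoop κ x₀ f)
    (hg : IsECLoop κ x₀ g) (hg' : IsECLoop κ x₀ h)
    (hgg : ECHomotopicFix κ g h) :
    ECHomotopicFix κ (ecStar f g) (ecStar f h) := by
  obtain ⟨k, G, ⟨g0, gk, gT, gS⟩, ge0, geT, c, gc⟩ := hgg
  refine ⟨k, fun n t => if n ≤ ecN f then f n else G (n - ecN f) t, ⟨?_, ?_, ?_, ?_⟩, ?_, ?_, ?_⟩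
  · intro n
    show (if n ≤ ecN f then f n else G (n - ecN f) 0) = ecStar f g n
    unfold ecStar
    by_cases h1 : n ≤ ecN f
    · rw [if_pos h1, if_pos h1]
    · rw [if_neg h1, if_neg h1, g0]
  · intro n
    show (if n ≤ ecN f then f n else G (n - ecN f) k) = ecStar f h n
    unfold ecStar
    by_cases h1 : n ≤ ecN f
    · rw [if_pos h1, if_pos h1]
    · rw [if_neg h1, if_neg h1, gk]
  · intro n s t hsk htk hst
    by_cases h1 : n ≤ ecN f
    · simp only [if_pos h1]
      exact Or.inl trivial
    · simp only [if_neg h1]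
      exact gT (n - ecN f) s t hsk htk hst
  · intro t ht
    constructor
    · apply ecCont_succ hκ
      intro n
      by_cases h1 : n + 1 ≤ ecN f
      · simp only [if_pos h1, if_pos (show n ≤ ecN f by omega)]
        exact hf.1.1 n (n+1) (Or.inl rfl)
      · by_cases h2 : n ≤ ecN f
        · simp only [if_pos h2, if_neg h1]
          rw [loop_x0 hf n (by omega), show n + 1 - ecN f = 1 by omega]
          have hG0 : G 0 t = x₀ := by rw [geT t ht, hg.2.1]
          have := (gS t ht).1 0 1 (Or.inl rfl)
          simp only [hG0] at this
          exact this
        · simp only [if_neg h1, if_neg h2, show n + 1 - ecN f = (n - ecN f) + 1 by omega]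
          exact (gS t ht).1 (n - ecN f) (n - ecN f + 1) (Or.inl rfl)
    · refine ⟨ecN f + max c (ecN g), fun n hn => ?_⟩
      have hval : ∀ m, ecN f + max c (ecN g) ≤ m →
          (if m ≤ ecN f then f m else G (m - ecN f) t) = x₀ := by
        intro m hm
        by_cases h1 : m ≤ ecN f
        · rw [if_pos h1]; exact loop_x0 hf m (by omega)
        · rw [if_neg h1, (gc (m - ecN f) (by omega)).2 t ht]
          exact loop_x0 hg _ (by omega)
      simp only [hval n hn, hval _ le_rfl]
  · show ecStar f g 0 = ecStar f h 0
    unfold ecStar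
    rw [if_pos (Nat.zero_le _), if_pos (Nat.zero_le _)]
  · intro t ht
    show (if 0 ≤ ecN f then f 0 else G (0 - ecN f) t) = ecStar f g 0
    unfold ecStar
    rw [if_pos (Nat.zero_le _), if_pos (Nat.zero_le _)]
  · refine ⟨ecN f + max c (ecN g) + 1, fun n hn => ⟨?_, ?_⟩⟩
    · unfold ecStar
      rw [if_neg (by omega), if_neg (by omega)]
      exact (gc (n - ecN f) (by omega)).1
    · intro t ht
      show (if n ≤ ecN f then f n else G (n - ecN f) t) = ecStar f g n
      unfold ecStar
      rw [if_neg (by omega), if_neg (by omega)]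
      exact (gc (n - ecN f) (by omega)).2 t ht

lemma pad_homot (hκ : Symmetric κ) (hf : IsECLoop κ x₀ f) (hg : IsECLoop κ x₀ g)
    {M : ℕ} (hM : ecN f ≤ M) :
    ECHomotopicFix κ (pS M f g) (ecStar f g) := by
  have hg01 : g 0 = g 1 ∨ κ (g 0) (g 1) := loop_adj01 hg
  refine ⟨M - ecN f, fun n t => if n ≤ M - t then f n else g (n - (M - t)),
    ⟨?_, ?_, ?_, ?_⟩, ?_, ?_, ?_⟩
  · intro n
    show (if n ≤ M - 0 then f n else g (n - (M - 0))) = pS M f g n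
    rfl
  · intro n
    show (if n ≤ M - (M - ecN f) then f n else g (n - (M - (M - ecN f)))) = ecStar f g n
    rw [show M - (M - ecN f) = ecN f by omega]
    rfl
  · apply tcont_of_succ hκ
    intro n t ht
    by_cases h1 : n ≤ M - (t + 1)
    · simp only [if_pos h1, if_pos (show n ≤ M - t by omega)]
      exact Or.inl trivial
    · by_cases h2 : n ≤ M - t
      · have hn : n = M - t := by omega
        simp only [if_pos h2, if_neg h1]
        rw [loop_x0 hf n (by omega), show n - (M - (t+1)) = 1 by omega, ← hg.2.1]
        exact hg01
      · simp only [if_neg h1, if_neg h2,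
          show n - (M - (t + 1)) = (n - (M - t)) + 1 by omega]
        exact hg.1.1 _ _ (Or.inl rfl)
  · intro t ht
    constructor
    · apply ecCont_succ hκ
      intro n
      by_cases h1 : n + 1 ≤ M - t
      · simp only [if_pos h1, if_pos (show n ≤ M - t by omega)]
        exact hf.1.1 n (n+1) (Or.inl rfl)
      · by_cases h2 : n ≤ M - t
        · have hn : n = M - t := by omega
          simp only [if_pos h2, if_neg h1]
          rw [loop_x0 hf n (by omega), show n + 1 - (M - t) = 1 by omega, ← hg.2.1]
          exact hg01
        · simp only [if_neg h1, if_neg h2,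
            show n + 1 - (M - t) = (n - (M - t)) + 1 by omega]
          exact hg.1.1 _ _ (Or.inl rfl)
    · refine ⟨M + ecN g, fun n hn => ?_⟩
      have hval : ∀ m, M + ecN g ≤ m →
          (if m ≤ M - t then f m else g (m - (M - t))) = x₀ := by
        intro m hm
        by_cases h1 : m ≤ M - t
        · rw [if_pos h1]; exact loop_x0 hf m (by omega)
        · rw [if_neg h1]; exact loop_x0 hg _ (by omega)
      simp only [hval n hn, hval _ le_rfl]
  · show pS M f g 0 = ecStar f g 0
    unfold pS ecStar
    rw [if_pos (Nat.zero_le _), if_pos (Nat.zero_le _)]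
  · intro t ht
    show (if 0 ≤ M - t then f 0 else g (0 - (M - t))) = pS M f g 0
    unfold pS
    rw [if_pos (Nat.zero_le _), if_pos (Nat.zero_le _)]
  · refine ⟨M + ecN g, fun n hn => ⟨?_, ?_⟩⟩
    · rw [pS_tail hf hg hM n hn, ecStar_eq_pS, pS_tail hf hg le_rfl n (by omega)]
    · intro t ht
      show (if n ≤ M - t then f n else g (n - (M - t))) = pS M f g n
      rw [pS_tail hf hg hM n hn]
      by_cases h1 : n ≤ M - t
      · rw [if_pos h1]; exact loop_x0 hf n (by omega)
      · rw [if_neg h1]; exact loop_x0 hg _ (by omega)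

lemma star_congr_left (hκ : Symmetric κ) (hf : IsECLoop κ x₀ f)
    (hf' : IsECLoop κ x₀ g) (hgl : IsECLoop κ x₀ h)
    (hff : ECHomotopicFix κ f g) :
    ECHomotopicFix κ (ecStar f h) (ecStar g h) := by
  obtain ⟨k, F, ⟨f0, fk, fT, fS⟩, fe0, feT, c, fc⟩ := hff
  set M : ℕ := max (max c (ecN f)) (ecN g) with hMdef
  have hMf : ecN f ≤ M := by omega
  have hMg : ecN g ≤ M := by omega
  have hMc : c ≤ M := by omega
  have hFtail : ∀ n, M ≤ n → ∀ t, t ≤ k → F n t = x₀ := by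
    intro n hn t ht
    rw [(fc n (by omega)).2 t ht]
    exact loop_x0 hf n (by omega)
  have hmid : ECHomotopicFix κ (pS M f h) (pS M g h) := by
    have hh01 : h 0 = h 1 ∨ κ (h 0) (h 1) := loop_adj01 hgl
    refine ⟨k, fun n t => if n ≤ M then F n t else h (n - M), ⟨?_, ?_, ?_, ?_⟩, ?_, ?_, ?_⟩
    · intro n
      show (if n ≤ M then F n 0 else h (n - M)) = pS M f h n
      unfold pS
      by_cases h1 : n ≤ M
      · rw [if_pos h1, if_pos h1, f0]
      · rw [if_neg h1, if_neg h1]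
    · intro n
      show (if n ≤ M then F n k else h (n - M)) = pS M g h n
      unfold pS
      by_cases h1 : n ≤ M
      · rw [if_pos h1, if_pos h1, fk]
      · rw [if_neg h1, if_neg h1]
    · intro n s t hsk htk hst
      by_cases h1 : n ≤ M
      · simp only [if_pos h1]
        exact fT n s t hsk htk hst
      · simp only [if_neg h1]
        exact Or.inl trivial
    · intro t ht
      constructor
      · apply ecCont_succ hκ
        intro n
        by_cases h1 : n + 1 ≤ M
        · simp only [if_pos h1, if_pos (show n ≤ M by omega)]
          exact (fS t ht).1 n (n+1) (Or.inl rfl)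
        · by_cases h2 : n ≤ M
          · have hn : n = M := by omega
            simp only [if_pos h2, if_neg h1]
            rw [hFtail n (by omega) t ht, show n + 1 - M = 1 by omega, ← hgl.2.1]
            exact hh01
          · simp only [if_neg h1, if_neg h2,
              show n + 1 - M = (n - M) + 1 by omega]
            exact hgl.1.1 _ _ (Or.inl rfl)
      · refine ⟨M + ecN h, fun n hn => ?_⟩
        have hval : ∀ m, M + ecN h ≤ m →
            (if m ≤ M then F m t else h (m - M)) = x₀ := by
          intro m hm
          by_cases h1 : m ≤ M
          · rw [if_pos h1]; exact hFtail m (by omega) t ht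
          · rw [if_neg h1]; exact loop_x0 hgl _ (by omega)
        simp only [hval n hn, hval _ le_rfl]
    · show pS M f h 0 = pS M g h 0
      unfold pS
      rw [if_pos (Nat.zero_le _), if_pos (Nat.zero_le _)]
      exact fe0
    · intro t ht
      show (if 0 ≤ M then F 0 t else h (0 - M)) = pS M f h 0
      unfold pS
      rw [if_pos (Nat.zero_le _), if_pos (Nat.zero_le _)]
      exact feT t ht
    · refine ⟨M + ecN h + 1, fun n hn => ⟨?_, ?_⟩⟩
      · unfold pS
        rw [if_neg (by omega), if_neg (by omega)]
      · intro t ht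
        show (if n ≤ M then F n t else h (n - M)) = pS M f h n
        unfold pS
        rw [if_neg (by omega), if_neg (by omega)]
  exact homFix_trans hκ (homFix_symm hκ (pad_homot hκ hf hgl hMf))
    (homFix_trans hκ hmid (pad_homot hκ hf' hgl hMg))

lemma ecRev_apply {n : ℕ} (h : n ≤ ecN f) : ecRev x₀ f n = f (ecN f - n) :=
  if_pos h

lemma rev_tail (hf : IsECLoop κ x₀ f) : ∀ n, ecN f ≤ n → ecRev x₀ f n = x₀ := by
  intro n hn
  unfold ecRev
  by_cases h1 : n ≤ ecN f
  · rw [if_pos h1, show ecN f - n = 0 by omega]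
    exact hf.2.1
  · rw [if_neg h1]

lemma rev_loop (hκ : Symmetric κ) (hf : IsECLoop κ x₀ f) :
    IsECLoop κ x₀ (ecRev x₀ f) := by
  refine ⟨⟨ecCont_succ hκ ?_, ecN f, fun n hn => by
      rw [rev_tail hf n hn, rev_tail hf _ le_rfl]⟩, ?_, ecN f, rev_tail hf⟩
  · intro n
    unfold ecRev
    by_cases h1 : n + 1 ≤ ecN f
    · rw [if_pos (by omega : n ≤ ecN f), if_pos h1]
      exact cont_step hf.1.1 (by unfold natAdj; omega)
    · by_cases h2 : n ≤ ecN f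
      · rw [if_pos h2, if_neg h1, show ecN f - n = 0 by omega]
        exact Or.inl hf.2.1
      · rw [if_neg h1, if_neg h2]
        exact Or.inl rfl
  · show (if 0 ≤ ecN f then f (ecN f - 0) else x₀) = x₀
    rw [if_pos (Nat.zero_le _)]
    exact loop_x0 hf _ (by omega)

lemma star_rev (hκ : Symmetric κ) (hf : IsECLoop κ x₀ f) :
    ECHomotopicFix κ (ecStar f (ecRev x₀ f)) (fun _ => x₀) := by
  refine ⟨ecN f, fun n t => if n ≤ 2 * ecN f then
      f (min (min n (2 * ecN f - n)) (ecN f - t)) else x₀, ⟨?_, ?_, ?_, ?_⟩, ?_, ?_, ?_⟩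
  · intro n
    show (if n ≤ 2 * ecN f then f (min (min n (2 * ecN f - n)) (ecN f - 0)) else x₀)
      = ecStar f (ecRev x₀ f) n
    unfold ecStar ecRev
    by_cases h1 : n ≤ ecN f
    · rw [if_pos (by omega : n ≤ 2 * ecN f), if_pos h1]
      congr 1
      omega
    · by_cases h2 : n ≤ 2 * ecN f
      · rw [if_pos h2, if_neg h1, if_pos (by omega : n - ecN f ≤ ecN f)]
        congr 1
        omega
      · rw [if_neg h2, if_neg h1, if_neg (by omega : ¬ n - ecN f ≤ ecN f)]
  · intro n
    show (if n ≤ 2 * ecN f then f (min (min n (2 * ecN f - n)) (ecN f - ecN f)) else x₀) = x₀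
    by_cases h1 : n ≤ 2 * ecN f
    · rw [if_pos h1, show min (min n (2 * ecN f - n)) (ecN f - ecN f) = 0 by omega]
      exact hf.2.1
    · rw [if_neg h1]
  · apply tcont_of_succ hκ
    intro n t ht
    by_cases h1 : n ≤ 2 * ecN f
    · simp only [if_pos h1]
      exact cont_step hf.1.1 (by unfold natAdj; omega)
    · simp only [if_neg h1]
      exact Or.inl trivial
  · intro t ht
    constructor
    · apply ecCont_succ hκ
      intro n
      by_cases h1 : n + 1 ≤ 2 * ecN f
      · simp only [if_pos h1, if_pos (show n ≤ 2 * ecN f by omega)]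
        exact cont_step hf.1.1 (by unfold natAdj; omega)
      · by_cases h2 : n ≤ 2 * ecN f
        · simp only [if_pos h2, if_neg h1,
            show min (min n (2 * ecN f - n)) (ecN f - t) = 0 by omega]
          exact Or.inl hf.2.1
        · simp only [if_neg h1, if_neg h2]
          exact Or.inl trivial
    · refine ⟨2 * ecN f + 1, fun n hn => ?_⟩
      show (if n ≤ 2 * ecN f then f (min (min n (2 * ecN f - n)) (ecN f - t)) else x₀)
        = (if 2 * ecN f + 1 ≤ 2 * ecN f then
            f (min (min (2 * ecN f + 1) (2 * ecN f - (2 * ecN f + 1))) (ecN f - t)) else x₀)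
      rw [if_neg (by omega), if_neg (by omega)]
  · show ecStar f (ecRev x₀ f) 0 = x₀
    unfold ecStar
    rw [if_pos (Nat.zero_le _)]
    exact hf.2.1
  · intro t ht
    show (if 0 ≤ 2 * ecN f then f (min (min 0 (2 * ecN f - 0)) (ecN f - t)) else x₀)
      = ecStar f (ecRev x₀ f) 0
    unfold ecStar
    rw [if_pos (Nat.zero_le _), if_pos (Nat.zero_le _)]
    congr 1
  · refine ⟨2 * ecN f + 1, fun n hn => ⟨?_, ?_⟩⟩
    · show ecStar f (ecRev x₀ f) n = x₀
      unfold ecStar ecRev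
      rw [if_neg (by omega), if_neg (by omega)]
    · intro t ht
      show (if n ≤ 2 * ecN f then f (min (min n (2 * ecN f - n)) (ecN f - t)) else x₀)
        = ecStar f (ecRev x₀ f) n
      unfold ecStar ecRev
      rw [if_neg (by omega), if_neg (by omega), if_neg (by omega)]

lemma shift_homot (hκ : Symmetric κ) (hf : IsECLoop κ x₀ f) (d : ℕ)
    (hd : ∀ i, i ≤ d → f i = x₀) :
    ECHomotopicFix κ f (fun n => f (d + n)) := by
  refine ⟨d, fun n t => f (t + n),
    ⟨fun n => by show f (0 + n) = f n; rw [Nat.zero_add], fun n => rfl, ?_, ?_⟩, ?_, ?_, ?_⟩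
  · apply tcont_of_succ hκ
    intro n t ht
    exact cont_step hf.1.1 (by unfold natAdj; omega)
  · intro t ht
    refine ⟨ecCont_succ hκ (fun n => cont_step hf.1.1 (by unfold natAdj; omega)),
      ecN f, fun n hn => ?_⟩
    show f (t + n) = f (t + ecN f)
    rw [loop_x0 hf _ (by omega), loop_x0 hf _ (by omega)]
  · show f 0 = f d
    rw [hf.2.1, hd d le_rfl]
  · intro t ht
    show f (t + 0) = f 0
    rw [hd (t + 0) (by omega), hf.2.1]
  · refine ⟨ecN f, fun n hn => ⟨?_, ?_⟩⟩
    · show f n = f (d + n)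
      rw [loop_x0 hf n hn, loop_x0 hf _ (by omega)]
    · intro t ht
      show f (t + n) = f n
      rw [loop_x0 hf _ (by omega), loop_x0 hf n hn]

lemma rev_ecN_le (hf : IsECLoop κ x₀ f) : ecN (ecRev x₀ f) ≤ ecN f :=
  Nat.sInf_le (fun n hn => by rw [rev_tail hf n hn, rev_tail hf _ le_rfl])

lemma rev_prefix (hκ : Symmetric κ) (hf : IsECLoop κ x₀ f) :
    ∀ i, i ≤ ecN f - ecN (ecRev x₀ f) → f i = x₀ := by
  intro i hi
  have hrle := rev_ecN_le hf
  have h1 : ecRev x₀ f (ecN f - i) = x₀ :=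
    loop_x0 (rev_loop hκ hf) _ (by omega)
  rw [ecRev_apply (Nat.sub_le _ _)] at h1
  rwa [show ecN f - (ecN f - i) = i by omega] at h1

lemma revrev_eq (hκ : Symmetric κ) (hf : IsECLoop κ x₀ f) :
    ecRev x₀ (ecRev x₀ f) = fun n => f ((ecN f - ecN (ecRev x₀ f)) + n) := by
  have hrle := rev_ecN_le hf
  funext m
  show (if m ≤ ecN (ecRev x₀ f) then ecRev x₀ f (ecN (ecRev x₀ f) - m) else x₀)
    = f (ecN f - ecN (ecRev x₀ f) + m)
  by_cases h1 : m ≤ ecN (ecRev x₀ f)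
  · rw [if_pos h1, ecRev_apply (show ecN (ecRev x₀ f) - m ≤ ecN f by omega)]
    congr 1
    omega
  · rw [if_neg h1]
    exact (loop_x0 hf _ (by omega)).symm

lemma rev_star (hκ : Symmetric κ) (hf : IsECLoop κ x₀ f) :
    ECHomotopicFix κ (ecStar (ecRev x₀ f) f) (fun _ => x₀) := by
  have hrev := rev_loop hκ hf
  have hrr := rev_loop hκ hrev
  have h1 : ECHomotopicFix κ (ecStar (ecRev x₀ f) (ecRev x₀ (ecRev x₀ f))) (fun _ => x₀) :=
    star_rev hκ hrev
  have h2 : ECHomotopicFix κ f (ecRev x₀ (ecRev x₀ f)) := by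
    rw [revrev_eq hκ hf]
    exact shift_homot hκ hf _ (rev_prefix hκ hf)
  have h3 := star_congr_right hκ hrev hf hrr h2
  exact homFix_trans hκ h3 h1

end ECAux

/-- `G(X,x₀)`, the set of classes of `x₀`-based EC loops under EC
homotopy holding the endpoints fixed, is a group under `[f]·[g] = [f*g]`: the
operation is closed and well defined, associative, the class of the constant loop is
an identity, and the reverse loop represents an inverse. -/
theorem ec_fundamental_group {X : Type*} (κ : X → X → Prop) (hκ : Symmetric κ)
    (x₀ : X) :
    (∀ f g, IsECLoop κ x₀ f → IsECLoop κ x₀ g → IsECLoop κ x₀ (ecStar f g)) ∧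
    (∀ f f' g g', IsECLoop κ x₀ f → IsECLoop κ x₀ f' →
       IsECLoop κ x₀ g → IsECLoop κ x₀ g' →
       ECHomotopicFix κ f f' → ECHomotopicFix κ g g' →
       ECHomotopicFix κ (ecStar f g) (ecStar f' g')) ∧
    (∀ f g h, IsECLoop κ x₀ f → IsECLoop κ x₀ g → IsECLoop κ x₀ h →
       ECHomotopicFix κ (ecStar (ecStar f g) h) (ecStar f (ecStar g h))) ∧
    (∀ f, IsECLoop κ x₀ f →
       ECHomotopicFix κ (ecStar (fun _ => x₀) f) f ∧
       ECHomotopicFix κ (ecStar f (fun _ => x₀)) f) ∧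
    (∀ f, IsECLoop κ x₀ f →
       IsECLoop κ x₀ (ecRev x₀ f) ∧
       ECHomotopicFix κ (ecStar f (ecRev x₀ f)) (fun _ => x₀) ∧
       ECHomotopicFix κ (ecStar (ecRev x₀ f) f) (fun _ => x₀)) := by
  refine ⟨?_, ?_, ?_, ?_, ?_⟩
  · intro f g hf hg
    exact ECAux.pS_loop hκ hf hg le_rfl
  · intro f f' g g' hf hf' hg hg' hff hgg
    exact ECAux.homFix_trans hκ (ECAux.star_congr_right hκ hf hg hg' hgg)
      (ECAux.star_congr_left hκ hf hf' hg' hff)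
  · intro f g h hf hg hh
    have hloop : IsECLoop κ x₀ (ecStar (ecStar f g) h) :=
      ECAux.pS_loop hκ (ECAux.pS_loop hκ hf hg le_rfl) hh le_rfl
    exact ECAux.homFix_of_eq hloop.1 (ECAux.ecStar_assoc hf hg hh)
  · intro f hf
    constructor
    · rw [ECAux.ecStar_const_left hf]
      exact ECAux.homFix_refl hf.1
    · rw [ECAux.ecStar_const_right hf (fun _ => rfl)]
      exact ECAux.homFix_refl hf.1
  · intro f hf
    exact ⟨ECAux.rev_loop hκ hf, ECAux.star_rev hκ hf, ECAux.rev_star hκ hf⟩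
end

section
/- Suppose F : (X,κ,x_0) → (Y,λ,y_0) is a pointed (κ,λ)-continuous function between pointed digital images (so F(x_0) = y_0). Then F induces a group homomorphism F_* : G(X,x_0) → G(Y,y_0) defined by F_*([f]) = [F ∘ f], where G(X,x_0) denotes the group of EC homotopy classes (holding endpoints fixed) of x_0-based EC loops in X with operation [f]·[g] = [f*g]. -/
lemma ecN_mem {X : Type*} (f : ℕ → X) (h : ∃ N, ∀ n, N ≤ n → f n = f N) :
    ∀ n, ecN f ≤ n → f n = f (ecN f) := by
  obtain ⟨N, hN⟩ := h
  have : ecN f ∈ {m | ∀ n, m ≤ n → f n = f m} := Nat.sInf_mem ⟨N, hN⟩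
  exact this

lemma ecN_le' {X : Type*} (f : ℕ → X) {M : ℕ} (h : ∀ n, M ≤ n → f n = f M) :
    ecN f ≤ M := Nat.sInf_le h

/-- A pointed continuous `F : (X,κ,x₀) → (Y,μ,y₀)` induces a
homomorphism `F₊ : G(X,x₀) → G(Y,y₀)`, `F₊[f] = [F ∘ f]`: `F ∘ f` is a `y₀`-based
EC loop, the assignment is well defined on classes, and it preserves products. -/
theorem ec_induced_homomorphism {X Y : Type*} (κ : X → X → Prop) (μ : Y → Y → Prop)
    (hκ : Symmetric κ) (hμ : Symmetric μ) (x₀ : X) (y₀ : Y)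
    (F : X → Y) (hF : DigCont κ μ F) (hFp : F x₀ = y₀) :
    (∀ f, IsECLoop κ x₀ f → IsECLoop μ y₀ (F ∘ f)) ∧
    (∀ f g, IsECLoop κ x₀ f → IsECLoop κ x₀ g →
       ECHomotopicFix κ f g → ECHomotopicFix μ (F ∘ f) (F ∘ g)) ∧
    (∀ f g, IsECLoop κ x₀ f → IsECLoop κ x₀ g →
       ECHomotopicFix μ (F ∘ ecStar f g) (ecStar (F ∘ f) (F ∘ g))) := by
  refine ⟨?_, ?_, ?_⟩
  · -- Part 1: F ∘ f is an EC loop at y₀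
    rintro f ⟨⟨hc, N, hN⟩, h0, N', hN'⟩
    refine ⟨⟨?_, N, ?_⟩, ?_, N', ?_⟩
    · intro a b hab
      rcases hc a b hab with h | h
      · exact Or.inl (congrArg F h)
      · exact hF _ _ h
    · intro n hn; exact congrArg F (hN n hn)
    · simpa [Function.comp, h0] using hFp
    · intro n hn; simp [Function.comp, hN' n hn, hFp]
  · -- Part 2: well-definedness
    rintro f g _ _ ⟨k, H, ⟨h0, hk, hadj, hst⟩, he0, he1, c, hec⟩
    refine ⟨k, fun n t => F (H n t), ⟨?_, ?_, ?_, ?_⟩, ?_, ?_, c, ?_⟩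
    · intro n; exact congrArg F (h0 n)
    · intro n; exact congrArg F (hk n)
    · intro n s t hs ht hst'
      rcases hadj n s t hs ht hst' with h | h
      · exact Or.inl (congrArg F h)
      · exact hF _ _ h
    · intro t ht
      obtain ⟨hc', N, hN⟩ := hst t ht
      refine ⟨?_, N, ?_⟩
      · intro a b hab
        rcases hc' a b hab with h | h
        · exact Or.inl (congrArg F h)
        · exact hF _ _ h
      · intro n hn; exact congrArg F (hN n hn)
    · exact congrArg F he0
    · intro t ht; exact congrArg F (he1 t ht)
    · intro n hn
      refine ⟨congrArg F (hec n hn).1, fun t ht => congrArg F ((hec n hn).2 t ht)⟩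
  · -- Part 3: products
    rintro f g ⟨⟨hfc, Nf, hNf⟩, hf0, Nf', hNf'⟩ ⟨⟨hgc, Ng, hNg⟩, hg0, Ng', hNg'⟩
    set M := ecN f with hMdef
    set m := ecN (F ∘ f) with hmdef
    -- basic facts
    have hM : ∀ n, M ≤ n → f n = f M := ecN_mem f ⟨Nf, hNf⟩
    have hm : ∀ n, m ≤ n → F (f n) = F (f m) :=
      ecN_mem (F ∘ f) ⟨Nf, fun n hn => congrArg F (hNf n hn)⟩
    have hmM : m ≤ M := ecN_le' (F ∘ f) (fun n hn => congrArg F (hM n hn))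
    have hfm_y : F (f m) = y₀ := by
      have h1 : F (f (max m Nf')) = F (f m) := hm _ (le_max_left _ _)
      have h2 : f (max m Nf') = x₀ := hNf' _ (le_max_right _ _)
      rw [h2, hFp] at h1
      exact h1.symm
    have hy : ∀ n, m ≤ n → F (f n) = y₀ := fun n hn => (hm n hn).trans hfm_y
    have hkey : y₀ = F (g 1) ∨ μ y₀ (F (g 1)) := by
      rcases hgc 0 1 (show natAdj 0 1 from Or.inl rfl) with h | h
      · exact Or.inl (by rw [← congrArg F h, hg0, hFp])
      · rcases hF _ _ h with h' | h'
        · exact Or.inl (by rw [← h', hg0, hFp])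
        · right; rwa [hg0, hFp] at h'
    set k := M - m with hkdef
    set H : ℕ → ℕ → Y := fun n t => if n ≤ M - t then F (f n) else F (g (n - (M - t)))
      with hHdef
    -- adjacency in t, consecutive case
    have hstep : ∀ n t, t + 1 ≤ k → H n t = H n (t + 1) ∨ μ (H n t) (H n (t + 1)) := by
      intro n t htk
      have hc1 : M - (t + 1) + 1 = M - t := by omega
      by_cases h1 : n ≤ M - (t + 1)
      · have h2 : n ≤ M - t := by omega
        simp only [hHdef, if_pos h1, if_pos h2]
        left; trivial
      · by_cases h2 : n ≤ M - t
        · -- n = M - t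
          have hn : n = M - t := by omega
          have hmn : m ≤ n := by omega
          have hsub : n - (M - (t + 1)) = 1 := by omega
          simp only [hHdef, if_pos h2, if_neg h1, hsub]
          rw [hy n hmn]
          exact hkey
        · -- both in g-part
          have hsub : n - (M - (t + 1)) = n - (M - t) + 1 := by omega
          simp only [hHdef, if_neg h1, if_neg h2, hsub]
          rcases hgc (n - (M - t)) (n - (M - t) + 1) (Or.inl rfl) with h | h
          · exact Or.inl (congrArg F h)
          · exact hF _ _ h
    refine ⟨k, H, ⟨?_, ?_, ?_, ?_⟩, ?_, ?_, ?_⟩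
    · -- H n 0 = (F ∘ ecStar f g) n
      intro n
      simp only [hHdef, Nat.sub_zero, ecStar, Function.comp, ← hMdef, apply_ite F]
    · -- H n k = ecStar (F ∘ f) (F ∘ g) n
      intro n
      have hMk : M - k = m := by omega
      simp only [hHdef, hMk, ecStar, Function.comp, ← hmdef]
    · -- adjacency in t
      intro n s t hs ht hst'
      rcases hst' with h | h
      · subst h; exact hstep n s ht
      · subst h
        rcases hstep n t hs with h' | h'
        · exact Or.inl h'.symm
        · exact Or.inr (hμ h')
    · -- each stage is an EC path
      intro t ht
      constructor
      · intro a b hab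
        -- reduce to consecutive case by symmetry
        have key : ∀ n : ℕ, H n t = H (n + 1) t ∨ μ (H n t) (H (n + 1) t) := by
          intro n
          by_cases h1 : n + 1 ≤ M - t
          · have h2 : n ≤ M - t := by omega
            simp only [hHdef, if_pos h1, if_pos h2]
            rcases hfc n (n + 1) (Or.inl rfl) with h | h
            · exact Or.inl (congrArg F h)
            · exact hF _ _ h
          · by_cases h2 : n ≤ M - t
            · have hn : n = M - t := by omega
              have hmn : m ≤ n := by omega
              have hsub : n + 1 - (M - t) = 1 := by omega
              simp only [hHdef, if_pos h2, if_neg h1, hsub]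
              rw [hy n hmn]
              exact hkey
            · have hsub : n + 1 - (M - t) = n - (M - t) + 1 := by omega
              simp only [hHdef, if_neg h1, if_neg h2, hsub]
              rcases hgc (n - (M - t)) (n - (M - t) + 1) (Or.inl rfl) with h | h
              · exact Or.inl (congrArg F h)
              · exact hF _ _ h
        rcases hab with h | h
        · subst h; exact key a
        · subst h
          rcases key b with h' | h'
          · exact Or.inl h'.symm
          · exact Or.inr (hμ h')
      · -- eventually constant
        refine ⟨M - t + Ng' + 1, fun n hn => ?_⟩
        have h1 : ¬ n ≤ M - t := by omega
        have h2 : ¬ M - t + Ng' + 1 ≤ M - t := by omega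
        simp only [hHdef, if_neg h1, if_neg h2]
        rw [hNg' (n - (M - t)) (by omega), hNg' (M - t + Ng' + 1 - (M - t)) (by omega)]
    · -- endpoints agree at 0
      simp [Function.comp, ecStar, ← hMdef, ← hmdef, Nat.zero_le]
    · -- H 0 t is fixed
      intro t ht
      have h1 : (0 : ℕ) ≤ M - t := Nat.zero_le _
      simp only [hHdef, if_pos h1, Function.comp, ecStar, ← hMdef, if_pos (Nat.zero_le M)]
    · -- eventually everything agrees
      refine ⟨M + Ng' + 1, fun n hn => ?_⟩
      have hval : ∀ j, M ≤ j → ¬ n ≤ j ∨ True := fun j _ => Or.inr trivial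
      have e1 : (F ∘ ecStar f g) n = y₀ := by
        have h1 : ¬ n ≤ M := by omega
        simp only [Function.comp, ecStar, ← hMdef, if_neg h1]
        rw [hNg' (n - M) (by omega), hFp]
      have e2 : ecStar (F ∘ f) (F ∘ g) n = y₀ := by
        have h1 : ¬ n ≤ m := by omega
        simp only [ecStar, Function.comp, ← hmdef, if_neg h1]
        rw [hNg' (n - m) (by omega), hFp]
      refine ⟨e1.trans e2.symm, fun t ht => ?_⟩
      have h1 : ¬ n ≤ M - t := by omega
      simp only [hHdef, if_neg h1]
      rw [hNg' (n - (M - t)) (by omega), hFp, e1]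
end
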